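/- arXiv:2304.03049 — 6 statements merged into one kernel-verified Lean document; each statement's English description precedes it below -/
import Mathlib

section
/- Define coefficients c_k by the power series expansion x/(−ln(1−x)) = ∑_{k=0}^∞ c_k x^k, valid for |x| < 1 (with the value 1 at x = 0). Then c_0 = 1 and |c_k| ≤ 1 for every k ≥ 1. -/
/-!
The coefficients of `-log(1-x)/x` are `1/(n+1)`, a positive sequence whose successive ratios
increase, and `c` is the coefficient sequence of the reciprocal series, i.e.
`∑_{j ≤ n} c_j / (n+1-j) = 0` for `n ≥ 1`. Kaluza's argument shows that the reciprocal of such a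
series has `c_n ≤ 0` for `n ≥ 1`; the convolution identity then reads
`-c_n = 1/(n+1) + ∑_{0<j<n} c_j/(n+1-j) ≤ 1/(n+1)`.
-/

open Finset Filter Topology FormalMultilinearSeries

section PowerSeries

variable {𝕜 : Type*} [NontriviallyNormedField 𝕜] {a b : ℕ → 𝕜} {f g : 𝕜 → 𝕜}

theorem hasFPowerSeriesAt_ofScalars_iff :
    HasFPowerSeriesAt f (ofScalars 𝕜 a) 0 ↔
      ∀ᶠ x in 𝓝 0, HasSum (fun n => a n * x ^ n) (f x) := by
  simp only [hasFPowerSeriesAt_iff, coeff_ofScalars, smul_eq_mul, mul_comm, zero_add]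

theorem hasFPowerSeriesAt_one_ofScalars_single :
    HasFPowerSeriesAt (1 : 𝕜 → 𝕜) (ofScalars 𝕜 (Pi.single 0 1 : ℕ → 𝕜)) 0 := by
  refine hasFPowerSeriesAt_ofScalars_iff.2 (Eventually.of_forall fun x => ?_)
  simpa using hasSum_single (f := fun n => (Pi.single 0 1 : ℕ → 𝕜) n * x ^ n) 0
    (fun n hn => by simp [hn])

theorem HasFPowerSeriesAt.eventually_summable_norm_ofScalars
    (hf : HasFPowerSeriesAt f (ofScalars 𝕜 a) 0) :
    ∀ᶠ x in 𝓝 0, Summable fun n => ‖a n * x ^ n‖ := by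
  obtain ⟨r, hr⟩ := hf
  filter_upwards [Metric.eball_mem_nhds 0 hr.r_pos] with x hx
  simpa [ofScalars_apply_eq, mul_comm] using
    (ofScalars 𝕜 a).summable_norm_apply (Metric.eball_subset_eball hr.r_le hx)

theorem HasFPowerSeriesAt.mul_ofScalars [CompleteSpace 𝕜]
    (hf : HasFPowerSeriesAt f (ofScalars 𝕜 a) 0) (hg : HasFPowerSeriesAt g (ofScalars 𝕜 b) 0) :
    HasFPowerSeriesAt (f * g)
      (ofScalars 𝕜 fun n => ∑ k ∈ range (n + 1), a k * b (n - k)) 0 := by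
  rw [hasFPowerSeriesAt_ofScalars_iff]
  filter_upwards [hasFPowerSeriesAt_ofScalars_iff.1 hf, hasFPowerSeriesAt_ofScalars_iff.1 hg,
    hf.eventually_summable_norm_ofScalars, hg.eventually_summable_norm_ofScalars]
    with x hfx hgx hfx' hgx'
  have h := hasSum_sum_range_mul_of_summable_norm hfx' hgx'
  rw [hfx.tsum_eq, hgx.tsum_eq] at h
  show HasSum _ (f x * g x)
  convert h using 1
  ext n
  rw [sum_mul]
  refine sum_congr rfl fun k hk => ?_
  rw [← pow_mul_pow_sub x (Nat.le_of_lt_succ (mem_range.1 hk))]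
  ring

end PowerSeries

section Kaluza

variable {a b : ℕ → ℝ}

/-- Kaluza's theorem: if `a > 0` has increasing ratios `a (n+1) / a n` and `b * a = b 0 * a 0`
as power series, then `b n ≤ 0` for `n ≥ 1`. -/
theorem succ_nonpos_of_sum_range_mul_eq_zero (ha : ∀ n, 0 < a n)
    (hratio : Monotone fun n => a (n + 1) / a n) (hb : 0 ≤ b 0)
    (hconv : ∀ n, ∑ j ∈ range (n + 2), b j * a (n + 1 - j) = 0) (n : ℕ) : b (n + 1) ≤ 0 := by
  induction n using Nat.strong_induction_on with
  | _ n ih =>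
  rcases n with _ | n
  · have h := hconv 0
    simp only [sum_range_succ, sum_range_zero] at h
    nlinarith [ha 0, ha 1, mul_nonneg hb (ha 1).le]
  -- Subtracting `t` times the identity for `n` from the one for `n + 1` kills the `j = 0` term;
  -- every other term is then a product of two nonpositive factors.
  set t := a (n + 2) / a (n + 1)
  have hsplit : b (n + 2) * a 0 =
      -∑ j ∈ range (n + 2), b j * (a (n + 2 - j) - t * a (n + 1 - j)) := by
    have h := hconv (n + 1)
    rw [sum_range_succ, Nat.sub_self] at h
    simp only [mul_sub, sum_sub_distrib, mul_left_comm _ t, ← mul_sum, hconv n]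
    linarith
  have hterm : ∀ j ∈ range (n + 2), 0 ≤ b j * (a (n + 2 - j) - t * a (n + 1 - j)) := by
    intro j hj
    rcases j with _ | j
    · rw [Nat.sub_zero, Nat.sub_zero, div_mul_cancel₀ _ (ha _).ne', sub_self, mul_zero]
    have hj : j ≤ n := by simp only [mem_range] at hj; omega
    have hk := hratio (show n - j ≤ n + 1 by omega)
    rw [div_le_iff₀ (ha _), show n - j + 1 = n + 2 - (j + 1) by omega] at hk
    rw [show n + 1 - (j + 1) = n - j by omega]
    exact mul_nonneg_of_nonpos_of_nonpos (ih j (by omega)) (by linarith)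
  nlinarith [sum_nonneg hterm, ha 0]

theorem abs_succ_mul_le_of_sum_range_mul_eq_zero (ha : ∀ n, 0 < a n)
    (hratio : Monotone fun n => a (n + 1) / a n) (hb : 0 ≤ b 0)
    (hconv : ∀ n, ∑ j ∈ range (n + 2), b j * a (n + 1 - j) = 0) (n : ℕ) :
    |b (n + 1)| * a 0 ≤ b 0 * a (n + 1) := by
  have hnonpos := succ_nonpos_of_sum_range_mul_eq_zero ha hratio hb hconv
  have h := hconv n
  rw [sum_range_succ, sum_range_succ', Nat.sub_self, Nat.sub_zero] at h
  have hrest : ∑ j ∈ range n, b (j + 1) * a (n + 1 - (j + 1)) ≤ 0 :=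
    sum_nonpos fun j _ => mul_nonpos_of_nonpos_of_nonneg (hnonpos j) (ha _).le
  rw [abs_of_nonpos (hnonpos n)]
  linarith

end Kaluza

theorem monotone_inv_succ_div_inv :
    Monotone fun n : ℕ => (((n + 1 : ℕ) : ℝ) + 1)⁻¹ / ((n : ℝ) + 1)⁻¹ := by
  refine monotone_nat_of_le_succ fun n => ?_
  push_cast
  rw [inv_div_inv, inv_div_inv, div_le_div_iff₀ (by positivity) (by positivity)]
  nlinarith

theorem hasSum_inv_succ_mul_pow {x : ℝ} (hx : |x| < 1) :
    HasSum (fun n : ℕ => ((n : ℝ) + 1)⁻¹ * x ^ n)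
      (if x = 0 then 1 else -Real.log (1 - x) / x) := by
  split_ifs with hx0
  · subst hx0
    simpa using hasSum_single (f := fun n : ℕ => ((n : ℝ) + 1)⁻¹ * 0 ^ n) 0
      (fun n hn => by simp [hn])
  have h := (Real.hasSum_pow_div_log_of_abs_lt_one hx).mul_left x⁻¹
  rw [inv_mul_eq_div] at h
  have hterm : (fun n : ℕ => ((n : ℝ) + 1)⁻¹ * x ^ n) =
      fun n : ℕ => x⁻¹ * (x ^ (n + 1) / (n + 1)) := by
    ext n
    rw [pow_succ']
    field_simp
  rwa [hterm]

theorem sum_range_mul_inv_succ_eq_single {c : ℕ → ℝ}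
    (hc : ∀ x : ℝ, |x| < 1 →
      HasSum (fun k => c k * x ^ k) (if x = 0 then 1 else x / -Real.log (1 - x))) :
    (fun n => ∑ k ∈ range (n + 1), c k * ((n - k : ℕ) + 1 : ℝ)⁻¹) = Pi.single 0 1 := by
  have hsmall : ∀ᶠ x : ℝ in 𝓝 0, |x| < 1 := by
    simpa using (continuous_abs.tendsto' (0 : ℝ) 0 abs_zero).eventually_lt_const one_pos
  have hF := hasFPowerSeriesAt_ofScalars_iff.2 (hsmall.mono hc)
  have hG := hasFPowerSeriesAt_ofScalars_iff.2 (hsmall.mono fun _ => hasSum_inv_succ_mul_pow)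
  rw [← ofScalars_series_eq_iff ℝ]
  refine ((hF.mul_ofScalars hG).congr ?_).eq_formalMultilinearSeries
    hasFPowerSeriesAt_one_ofScalars_single
  filter_upwards [hsmall] with x hx
  simp only [Pi.mul_apply, Pi.one_apply]
  split_ifs with hx0
  · exact one_mul 1
  have hlog : Real.log (1 - x) ≠ 0 := Real.log_ne_zero_of_pos_of_ne_one
    (by linarith [(abs_lt.1 hx).2]) (fun h => hx0 (by linarith))
  field_simp

/-- If `c_k` are the Taylor coefficients at `0` of `x ↦ x/(-ln(1-x))` (with value `1` at
`x = 0`), i.e. `∑ c_k x^k = x/(-ln(1-x))` for `|x| < 1`, then `c_0 = 1` and `|c_k| ≤ 1`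
for every `k ≥ 1`. -/
theorem gregory_coefficients_bound (c : ℕ → ℝ)
    (hc : ∀ x : ℝ, |x| < 1 →
      HasSum (fun k : ℕ => c k * x ^ k)
        (if x = 0 then 1 else x / (-Real.log (1 - x)))) :
    c 0 = 1 ∧ ∀ k : ℕ, 1 ≤ k → |c k| ≤ 1 := by
  have hconv := sum_range_mul_inv_succ_eq_single hc
  have hc0 : c 0 = 1 := by simpa using congrFun hconv 0
  have hrec (n : ℕ) : ∑ j ∈ range (n + 2), c j * ((n + 1 - j : ℕ) + 1 : ℝ)⁻¹ = 0 := by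
    simpa using congrFun hconv (n + 1)
  refine ⟨hc0, fun k hk => ?_⟩
  obtain ⟨n, rfl⟩ := Nat.exists_eq_add_of_le' hk
  have hbound := abs_succ_mul_le_of_sum_range_mul_eq_zero
    (a := fun m : ℕ => ((m : ℝ) + 1)⁻¹) (fun m => by positivity) monotone_inv_succ_div_inv
    (hc0 ▸ zero_le_one) hrec n
  calc |c (n + 1)| ≤ (((n + 1 : ℕ) : ℝ) + 1)⁻¹ := by simpa [hc0] using hbound
    _ ≤ 1 := inv_le_one_of_one_le₀ (le_add_of_nonneg_left (Nat.cast_nonneg _))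
end

section
/- For every integer l ≥ 0 there exists a constant C_l > 0 such that for every integer d ≥ 1 and every complex s with Re s ≥ 1 − ε_d/2, where ε_d = 1/(3·ln(ω(d)+2)), the l-th complex derivative of J_d satisfies |J_d^{(l)}(s)| ≤ C_l·(ω(d)+2)^{10}. -/
/-!
For `‖w‖ > 1` and `L = log (w / (w - 1))` we have `exp (-L) = 1 - w⁻¹`, and the mean value
inequality for `exp` on `[0, -L]` gives `‖w‖⁻¹ ≤ (1 + ‖w‖⁻¹) ‖L‖`. So each factor of `J_d(s)` has
norm at most `1 + p^{-σ} ≤ exp (p^{-σ})`, `σ = Re s`. The `i`-th prime factor of `d` is at least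
`i + 2`, and `x^{-σ} ≤ x^{ε_d} / x ≤ e^{1/3} / x` for `σ ≥ 1 - ε_d` and `x ≤ ω(d) + 2`; comparing
with the harmonic sum gives `‖J_d‖ ≤ (ω(d) + 2)²` on `Re s ≥ 1 - ε_d`. Cauchy's estimate on the
disc of radius `ε_d / 2` bounds the `l`-th derivative by `l! (ω(d) + 2)² (6 log (ω(d) + 2))^l`,
and `(log x)^l ≤ (l + 1)^l x`.
-/
open Finset

/-- `J_d(s) = ∏_{p | d} (p^s log(p^s/(p^s-1)))⁻¹`, the product over the distinct prime
divisors of `d`, with the principal branch of the complex logarithm. -/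
noncomputable def Jfun (d : ℕ) (s : ℂ) : ℂ :=
  ∏ p ∈ d.primeFactors,
    ((p : ℂ) ^ s * Complex.log ((p : ℂ) ^ s / ((p : ℂ) ^ s - 1)))⁻¹

open Metric

theorem norm_cexp_sub_one_le (u : ℂ) : ‖Complex.exp u - 1‖ ≤ max 1 ‖Complex.exp u‖ * ‖u‖ := by
  have hs : Convex ℝ {z : ℂ | z.re ≤ max 0 u.re} := convex_halfSpace_re_le _
  have := hs.norm_image_sub_le_of_norm_deriv_le (f := Complex.exp) (C := max 1 ‖Complex.exp u‖)
    (fun z _ => Complex.differentiableAt_exp) ?_ (x := 0) (y := u) (by simp) (by simp)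
  · simpa using this
  · intro z hz
    rw [Complex.deriv_exp, Complex.norm_exp, Complex.norm_exp, ← Real.exp_zero,
      ← Real.exp_monotone.map_max]
    exact Real.exp_le_exp.2 hz

section OneLtNorm

variable {w : ℂ} (hw : 1 < ‖w‖)
include hw

theorem ne_zero_of_one_lt_norm : w ≠ 0 :=
  norm_pos_iff.1 (one_pos.trans hw)

theorem sub_one_ne_zero_of_one_lt_norm : w - 1 ≠ 0 :=
  sub_ne_zero.2 fun h => by simp [h] at hw

theorem div_sub_one_eq_inv_one_sub_inv : w / (w - 1) = (1 - w⁻¹)⁻¹ := by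
  rw [← inv_div, sub_div, div_self (ne_zero_of_one_lt_norm hw), one_div]

theorem div_sub_one_mem_slitPlane : w / (w - 1) ∈ Complex.slitPlane := by
  have hre : 0 < (1 - w⁻¹).re := by
    have := (Complex.re_le_norm w⁻¹).trans_lt (by rwa [norm_inv, inv_lt_one₀ (one_pos.trans hw)])
    rw [Complex.sub_re, Complex.one_re]
    linarith
  rw [div_sub_one_eq_inv_one_sub_inv hw, Complex.mem_slitPlane_iff, Complex.inv_re]
  exact Or.inl (div_pos hre (Complex.normSq_pos.2 fun h => by simp [h] at hre))

theorem log_div_sub_one_ne_zero : Complex.log (w / (w - 1)) ≠ 0 := by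
  have hw1 := sub_one_ne_zero_of_one_lt_norm hw
  intro h
  have := Complex.exp_log (div_ne_zero (ne_zero_of_one_lt_norm hw) hw1)
  rw [h, Complex.exp_zero, eq_comm, div_eq_one_iff_eq hw1] at this
  exact one_ne_zero (by linear_combination this)

theorem norm_inv_mul_log_div_sub_one_le : ‖(w * Complex.log (w / (w - 1)))⁻¹‖ ≤ 1 + ‖w‖⁻¹ := by
  set L := Complex.log (w / (w - 1))
  have hexp : Complex.exp (-L) = 1 - w⁻¹ := by
    rw [Complex.exp_neg, Complex.exp_log, div_sub_one_eq_inv_one_sub_inv hw, inv_inv]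
    exact div_ne_zero (ne_zero_of_one_lt_norm hw) (sub_one_ne_zero_of_one_lt_norm hw)
  have key : ‖w‖⁻¹ ≤ (1 + ‖w‖⁻¹) * ‖L‖ := by
    have := norm_cexp_sub_one_le (-L)
    rw [hexp, sub_sub_cancel_left, norm_neg, norm_neg, norm_inv] at this
    refine this.trans (mul_le_mul_of_nonneg_right (max_le ?_ ?_) (norm_nonneg L))
    · linarith [inv_nonneg.2 (norm_nonneg w)]
    · simpa using norm_sub_le (1 : ℂ) w⁻¹
  rw [norm_inv, norm_mul, mul_inv, ← div_eq_mul_inv,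
    div_le_iff₀ (norm_pos_iff.2 (log_div_sub_one_ne_zero hw))]
  exact key

end OneLtNorm

theorem one_lt_norm_natCast_cpow {p : ℕ} (hp : 1 < p) {s : ℂ} (hs : 0 < s.re) :
    1 < ‖(p : ℂ) ^ s‖ := by
  rw [Complex.norm_natCast_cpow_of_pos (by omega)]
  exact Real.one_lt_rpow (by exact_mod_cast hp) hs

theorem Jfun_differentiableOn (d : ℕ) : DifferentiableOn ℂ (Jfun d) {s | 0 < s.re} := by
  intro s hs
  refine DifferentiableAt.differentiableWithinAt (DifferentiableAt.fun_finsetProd fun p hpd => ?_)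
  have hp := (Nat.prime_of_mem_primeFactors hpd).one_lt
  have hw := one_lt_norm_natCast_cpow hp hs
  have hpow : DifferentiableAt ℂ (fun s : ℂ => (p : ℂ) ^ s) s :=
    differentiableAt_id.const_cpow (Or.inl (by exact_mod_cast (by omega : p ≠ 0)))
  have hlog := (hpow.div (hpow.sub_const 1) (sub_one_ne_zero_of_one_lt_norm hw)).clog
    (div_sub_one_mem_slitPlane hw)
  exact (hpow.mul hlog).inv (mul_ne_zero (ne_zero_of_one_lt_norm hw) (log_div_sub_one_ne_zero hw))

theorem norm_Jfun_le_exp_sum (d : ℕ) {s : ℂ} (hs : 0 < s.re) :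
    ‖Jfun d s‖ ≤ Real.exp (∑ p ∈ d.primeFactors, (p : ℝ) ^ (-s.re)) := by
  rw [Jfun, norm_prod, Real.exp_sum]
  refine prod_le_prod (fun _ _ => norm_nonneg _) fun p hpd => ?_
  have hp := (Nat.prime_of_mem_primeFactors hpd).one_lt
  calc _ ≤ 1 + ‖(p : ℂ) ^ s‖⁻¹ := norm_inv_mul_log_div_sub_one_le (one_lt_norm_natCast_cpow hp hs)
    _ = 1 + (p : ℝ) ^ (-s.re) := by
      rw [Complex.norm_natCast_cpow_of_pos (by omega), Real.rpow_neg (Nat.cast_nonneg p)]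
    _ ≤ _ := by linarith [Real.add_one_le_exp ((p : ℝ) ^ (-s.re))]

theorem sum_le_sum_range_of_antitoneOn {f : ℕ → ℝ} {a : ℕ} (hf : AntitoneOn f (Set.Ici a))
    (S : Finset ℕ) (hS : ∀ p ∈ S, a ≤ p) :
    ∑ p ∈ S, f p ≤ ∑ i ∈ range #S, f (a + i) := by
  induction S using Finset.induction_on_max with
  | empty => simp
  | insert m T hlt ih =>
    have hmT : m ∉ T := fun h => lt_irrefl m (hlt m h)
    have hcard : a + #T ≤ m := by
      have := card_le_card fun x hx => mem_Ico.2 ⟨hS x (mem_insert_of_mem hx), hlt x hx⟩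
      rw [Nat.card_Ico] at this
      have := hS m (mem_insert_self m T)
      omega
    rw [sum_insert hmT, card_insert_of_notMem hmT, sum_range_succ, add_comm]
    gcongr
    · exact ih fun p hp => hS p (mem_insert_of_mem hp)
    · exact hf (Set.mem_Ici.2 (by omega)) (Set.mem_Ici.2 (by omega)) hcard

theorem sum_range_inv_add_two_le_log (n : ℕ) :
    ∑ i ∈ range n, ((i : ℝ) + 2)⁻¹ ≤ Real.log (n + 1) := by
  have h := harmonic_le_one_add_log (n + 1)
  rw [harmonic, Rat.cast_sum, sum_range_succ'] at h
  push_cast at h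
  simp only [add_assoc, one_add_one_eq_two] at h
  linarith

theorem one_div_three_mul_log_le_half {x : ℝ} (hx : 2 ≤ x) : 1 / (3 * Real.log x) ≤ 1 / 2 := by
  have := Real.log_le_log two_pos hx
  have := Real.log_two_gt_d9
  rw [div_le_div_iff₀ (by linarith) two_pos]
  linarith

theorem rpow_neg_le_two_mul_inv {x ε σ : ℝ} (hx : 1 ≤ x) (hεx : ε * Real.log x ≤ 1 / 3)
    (hσ : 1 - ε ≤ σ) : x ^ (-σ) ≤ 2 * x⁻¹ := by
  have hx0 : 0 < x := one_pos.trans_le hx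
  have hexp : x ^ ε ≤ 2 := by
    have := Real.add_one_le_exp (-(1 / 3))
    rw [Real.exp_neg] at this
    rw [Real.rpow_def_of_pos hx0, mul_comm]
    calc Real.exp (ε * Real.log x) ≤ Real.exp (1 / 3) := Real.exp_le_exp.2 hεx
      _ ≤ 2 := by linarith [(le_inv_comm₀ (by norm_num) (Real.exp_pos _)).1 this]
  calc x ^ (-σ) ≤ x ^ (ε - 1) := Real.rpow_le_rpow_of_exponent_le hx (by linarith)
    _ = x ^ ε * x⁻¹ := by rw [Real.rpow_sub_one hx0.ne', div_eq_mul_inv]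
    _ ≤ 2 * x⁻¹ := by gcongr

theorem two_le_card_primeFactors_add_two (d : ℕ) : (2 : ℝ) ≤ #d.primeFactors + 2 := by
  linarith [(#d.primeFactors).cast_nonneg (α := ℝ)]

theorem sum_primeFactors_rpow_neg_le (d : ℕ) {σ : ℝ}
    (hσ : 1 - 1 / (3 * Real.log ((#d.primeFactors : ℝ) + 2)) ≤ σ) :
    ∑ p ∈ d.primeFactors, (p : ℝ) ^ (-σ) ≤ 2 * Real.log ((#d.primeFactors : ℝ) + 2) := by
  set ω := #d.primeFactors
  have hW := two_le_card_primeFactors_add_two d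
  have hlog : 0 < Real.log ((ω : ℝ) + 2) := Real.log_pos (by linarith)
  have hσ0 : 0 ≤ σ := by linarith [one_div_three_mul_log_le_half hW]
  have hanti : AntitoneOn (fun x : ℕ => (x : ℝ) ^ (-σ)) (Set.Ici 2) := fun a ha b _ hab =>
    Real.rpow_le_rpow_of_nonpos (Nat.cast_pos.2 (zero_lt_two.trans_le ha))
      (by exact_mod_cast hab) (by linarith)
  calc ∑ p ∈ d.primeFactors, (p : ℝ) ^ (-σ)
      ≤ ∑ i ∈ range ω, ((2 + i : ℕ) : ℝ) ^ (-σ) := sum_le_sum_range_of_antitoneOn hanti _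
        fun p hp => (Nat.prime_of_mem_primeFactors hp).two_le
    _ ≤ ∑ i ∈ range ω, 2 * ((i : ℝ) + 2)⁻¹ := by
      refine sum_le_sum fun i hi => ?_
      push_cast
      rw [add_comm]
      refine rpow_neg_le_two_mul_inv (by linarith [(i.cast_nonneg : (0 : ℝ) ≤ i)]) ?_ hσ
      rw [div_mul_eq_mul_div, div_le_div_iff₀ (by positivity) (by norm_num)]
      have : (i : ℝ) + 2 ≤ ω + 2 := by
        gcongr
        exact_mod_cast (mem_range.1 hi).le
      nlinarith [Real.log_le_log (by positivity) this]
    _ = 2 * ∑ i ∈ range ω, ((i : ℝ) + 2)⁻¹ := (mul_sum _ _ _).symm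
    _ ≤ 2 * Real.log ((ω : ℝ) + 2) := by
      gcongr
      exact (sum_range_inv_add_two_le_log ω).trans (Real.log_le_log (by positivity) (by linarith))

theorem norm_Jfun_le_sq (d : ℕ) {s : ℂ}
    (hs : 1 - 1 / (3 * Real.log ((#d.primeFactors : ℝ) + 2)) ≤ s.re) :
    ‖Jfun d s‖ ≤ ((#d.primeFactors : ℝ) + 2) ^ 2 := by
  have hW := two_le_card_primeFactors_add_two d
  have hs0 : 0 < s.re := by linarith [one_div_three_mul_log_le_half hW]
  calc ‖Jfun d s‖ ≤ Real.exp (∑ p ∈ d.primeFactors, (p : ℝ) ^ (-s.re)) :=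
        norm_Jfun_le_exp_sum d hs0
    _ ≤ Real.exp (2 * Real.log ((#d.primeFactors : ℝ) + 2)) :=
        Real.exp_le_exp.2 (sum_primeFactors_rpow_neg_le d hs)
    _ = ((#d.primeFactors : ℝ) + 2) ^ 2 := by
        rw [mul_comm, Real.exp_mul, Real.exp_log (by linarith)]
        norm_cast

theorem log_pow_le_mul_self (n : ℕ) {x : ℝ} (hx : 1 ≤ x) :
    Real.log x ^ n ≤ (n + 1) ^ n * x := by
  have hn : ((n : ℝ) + 1) = ((n + 1 : ℕ) : ℝ) := by push_cast; rfl
  have hε : (0 : ℝ) < ((n : ℝ) + 1)⁻¹ := by positivity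
  have hy : 1 ≤ x ^ ((n : ℝ) + 1)⁻¹ := Real.one_le_rpow hx hε.le
  have hlog : Real.log x ≤ (n + 1) * x ^ ((n : ℝ) + 1)⁻¹ := by
    have := Real.log_le_rpow_div (x := x) (by linarith) hε
    rwa [div_inv_eq_mul, mul_comm] at this
  calc Real.log x ^ n ≤ ((n + 1) * x ^ ((n : ℝ) + 1)⁻¹) ^ n := by
        gcongr; exact Real.log_nonneg hx
    _ = (n + 1) ^ n * (x ^ ((n : ℝ) + 1)⁻¹) ^ n := mul_pow _ _ _
    _ ≤ (n + 1) ^ n * (x ^ ((n : ℝ) + 1)⁻¹) ^ (n + 1) :=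
        mul_le_mul_of_nonneg_left (pow_le_pow_right₀ hy n.le_succ) (by positivity)
    _ = (n + 1) ^ n * x := by rw [hn, Real.rpow_inv_natCast_pow (by linarith) n.succ_ne_zero]

theorem sub_le_re_of_mem_closedBall {s z : ℂ} {r : ℝ} (hz : z ∈ closedBall s r) :
    s.re - r ≤ z.re := by
  have := (Complex.abs_re_le_norm (z - s)).trans (mem_closedBall_iff_norm.1 hz)
  rw [Complex.sub_re] at this
  linarith [(abs_le.1 this).1]

/-- For every `l ≥ 0` there is `C_l > 0` such that for all `d ≥ 1` and all `s` with
`Re s ≥ 1 - ε_d/2`, where `ε_d = 1/(3 ln(ω(d)+2))`, one has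
`|J_d^{(l)}(s)| ≤ C_l (ω(d)+2)^{10}`. -/
theorem iteratedDeriv_Jfun_bound (l : ℕ) :
    ∃ C : ℝ, 0 < C ∧ ∀ d : ℕ, 1 ≤ d → ∀ s : ℂ,
      1 - (1 / (3 * Real.log ((d.primeFactors.card : ℝ) + 2))) / 2 ≤ s.re →
      ‖iteratedDeriv l (Jfun d) s‖ ≤ C * ((d.primeFactors.card : ℝ) + 2) ^ 10 := by
  refine ⟨l.factorial * 6 ^ l * (l + 1) ^ l, by positivity, fun d _ s hs => ?_⟩
  set W : ℝ := (#d.primeFactors : ℝ) + 2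
  have hW : 2 ≤ W := two_le_card_primeFactors_add_two d
  set ε := 1 / (3 * Real.log W)
  have hball : ∀ z ∈ closedBall s (ε / 2), 1 - ε ≤ z.re := fun z hz => by
    linarith [sub_le_re_of_mem_closedBall hz]
  have hsub : closedBall s (ε / 2) ⊆ {z | 0 < z.re} := fun z hz =>
    show 0 < z.re by linarith [hball z hz, one_div_three_mul_log_le_half hW]
  have hcauchy := Complex.norm_iteratedDeriv_le_of_forall_mem_sphere_norm_le l
    (by have := Real.log_pos (by linarith : 1 < W); positivity : 0 < ε / 2)
    ((Jfun_differentiableOn d).diffContOnCl_ball hsub)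
    fun z hz => norm_Jfun_le_sq d (hball z (sphere_subset_closedBall hz))
  calc _ ≤ l.factorial * W ^ 2 / (ε / 2) ^ l := hcauchy
    _ = l.factorial * 6 ^ l * Real.log W ^ l * W ^ 2 := by
      rw [show ε / 2 = (6 * Real.log W)⁻¹ by ring, inv_pow, div_inv_eq_mul, mul_pow]; ring
    _ ≤ l.factorial * 6 ^ l * ((l + 1) ^ l * W) * W ^ 2 := by
      gcongr; exact log_pow_le_mul_self l (by linarith)
    _ = l.factorial * 6 ^ l * (l + 1) ^ l * W ^ 3 := by ring
    _ ≤ l.factorial * 6 ^ l * (l + 1) ^ l * W ^ 10 := by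
      gcongr; exacts [by linarith, by norm_num]
end

section
/- For every fixed integer m ≥ 0 there exists a constant C_m > 0 such that for every prime p, the m-th derivative at s = 1 of the function f(s;p) = ln p/((p^s − 1)·ln(p^s/(p^s−1))) − ln p satisfies |f^{(m)}(1;p)| ≤ C_m·(ln p)^{m+1}/p. -/
/-- `f(s;p) = ln p/((p^s - 1) log(p^s/(p^s-1))) - ln p`, with the principal branch of the
complex logarithm. -/
noncomputable def fsp (p : ℕ) (s : ℂ) : ℂ :=
  (Real.log p : ℂ) / (((p : ℂ) ^ s - 1) * Complex.log ((p : ℂ) ^ s / ((p : ℂ) ^ s - 1))) -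
    (Real.log p : ℂ)

/-! Put `z = p ^ s - 1`. Then `p ^ s / (p ^ s - 1) = 1 + z⁻¹`, so
`f(s;p) = log p · ((z log (1 + z⁻¹))⁻¹ - 1)`, and the Taylor bound for `log (1 + w)` gives
`z log (1 + z⁻¹) = 1 + O(1/|z|)`, whence `|f(s;p)| ≤ log p / |z|` once `|z| ≥ 3`.
On the closed disc of radius `1 / log p` about `s = 1` we have `|p ^ s| ≥ p / e`, so
`|f| ≤ 4 log p / p` there, and Cauchy's estimate on that disc gives
`|f^{(m)}(1;p)| ≤ 4 m! (log p)^{m+1} / p` for `p ≥ 12`. The finitely many smaller primes are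
absorbed into the constant. -/

open Complex Metric Nat

noncomputable def invMulLogOneAddInvSubOne (z : ℂ) : ℂ :=
  (z * log (1 + z⁻¹))⁻¹ - 1

lemma norm_mul_log_one_add_inv_sub_one_le {z : ℂ} (hz : 1 < ‖z‖) :
    ‖z * log (1 + z⁻¹) - 1‖ ≤ (2 * (‖z‖ - 1))⁻¹ := by
  have hz0 : z ≠ 0 := norm_pos_iff.mp (by linarith)
  have hw : ‖z⁻¹‖ < 1 := by rw [norm_inv]; exact inv_lt_one_of_one_lt₀ hz
  have hlog := norm_log_one_add_sub_self_le hw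
  calc ‖z * log (1 + z⁻¹) - 1‖ = ‖z‖ * ‖log (1 + z⁻¹) - z⁻¹‖ := by
        rw [← norm_mul, mul_sub, mul_inv_cancel₀ hz0]
    _ ≤ ‖z‖ * (‖z⁻¹‖ ^ 2 * (1 - ‖z⁻¹‖)⁻¹ / 2) := by gcongr
    _ = (2 * (‖z‖ - 1))⁻¹ := by
        rw [norm_inv]
        field_simp

lemma mul_log_one_add_inv_ne_zero {z : ℂ} (hz : 2 ≤ ‖z‖) : z * log (1 + z⁻¹) ≠ 0 := by
  intro h
  have := norm_mul_log_one_add_inv_sub_one_le (z := z) (by linarith)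
  rw [h, zero_sub, norm_neg, norm_one] at this
  have : (2 * (‖z‖ - 1))⁻¹ ≤ 2⁻¹ := inv_anti₀ (by norm_num) (by linarith)
  linarith

lemma norm_invMulLogOneAddInvSubOne_le {z : ℂ} (hz : 3 ≤ ‖z‖) :
    ‖invMulLogOneAddInvSubOne z‖ ≤ ‖z‖⁻¹ := by
  set D := z * log (1 + z⁻¹)
  set δ := (2 * (‖z‖ - 1))⁻¹ with hδ_def
  have hD : ‖D - 1‖ ≤ δ := norm_mul_log_one_add_inv_sub_one_le (by linarith)
  have hDlb : 1 - δ ≤ ‖D‖ := by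
    have := norm_sub_norm_le (1 : ℂ) (1 - D)
    rw [sub_sub_cancel, norm_one, norm_sub_rev] at this
    linarith
  have hδ0 : 0 ≤ δ := inv_nonneg.mpr (by linarith)
  have hδ : δ ≤ 4⁻¹ := inv_anti₀ (by norm_num) (by linarith)
  calc ‖invMulLogOneAddInvSubOne z‖ = ‖D - 1‖ / ‖D‖ := by
        rw [invMulLogOneAddInvSubOne, ← norm_div, div_eq_mul_inv, sub_mul, one_mul,
          mul_inv_cancel₀ (mul_log_one_add_inv_ne_zero (by linarith)), ← neg_sub, norm_neg]
    _ ≤ δ / (3 / 4) := by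
        gcongr
        linarith
    _ ≤ ‖z‖⁻¹ := by
        rw [hδ_def, ← one_div, ← one_div, div_div, div_le_div_iff₀ (by nlinarith) (by linarith)]
        nlinarith

lemma differentiableAt_invMulLogOneAddInvSubOne {z : ℂ} (hz : 2 ≤ ‖z‖) :
    DifferentiableAt ℂ invMulLogOneAddInvSubOne z := by
  have hz0 : z ≠ 0 := norm_pos_iff.mp (by linarith)
  have hslit : 1 + z⁻¹ ∈ slitPlane :=
    mem_slitPlane_of_norm_lt_one (by rw [norm_inv]; exact inv_lt_one_of_one_lt₀ (by linarith))
  have hlog : DifferentiableAt ℂ (fun w : ℂ ↦ log (1 + w⁻¹)) z :=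
    ((differentiableAt_inv hz0).const_add 1).clog hslit
  have hmul : DifferentiableAt ℂ (fun w : ℂ ↦ w * log (1 + w⁻¹)) z := differentiableAt_id.mul hlog
  exact (hmul.inv (mul_log_one_add_inv_ne_zero hz)).sub_const 1

-- Valid for every `s`: where `p ^ s = 1` both sides are `-log p`, by the junk values
-- of `/` and `log` at `0`.
lemma fsp_eq (p : ℕ) :
    fsp p = fun s ↦ Real.log p * invMulLogOneAddInvSubOne ((p : ℂ) ^ s - 1) := by
  ext s
  rcases eq_or_ne ((p : ℂ) ^ s) 1 with h | h
  · simp [fsp, invMulLogOneAddInvSubOne, h]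
  · have : (p : ℂ) ^ s / ((p : ℂ) ^ s - 1) = 1 + ((p : ℂ) ^ s - 1)⁻¹ := by
      field_simp [sub_ne_zero.mpr h]
      ring
    rw [fsp, invMulLogOneAddInvSubOne, this, div_eq_mul_inv, mul_sub, mul_one]

lemma div_exp_one_le_norm_natCast_cpow {p : ℕ} (hp : 1 < p) {s : ℂ}
    (hs : s ∈ closedBall 1 (Real.log p)⁻¹) : p / Real.exp 1 ≤ ‖(p : ℂ) ^ s‖ := by
  have hp0 : (0 : ℝ) < p := by positivity
  have hL : 0 < Real.log p := Real.log_pos (by exact_mod_cast hp)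
  have hre : 1 - (Real.log p)⁻¹ ≤ s.re := by
    have := (abs_le.mp ((abs_re_le_norm (s - 1)).trans (mem_closedBall_iff_norm.mp hs))).1
    rw [sub_re, one_re] at this
    linarith
  calc (p : ℝ) / Real.exp 1 = (p : ℝ) ^ (1 - (Real.log p)⁻¹) := by
        rw [Real.rpow_def_of_pos hp0, mul_sub, mul_one, mul_inv_cancel₀ hL.ne', Real.exp_sub,
          Real.exp_log hp0]
    _ ≤ (p : ℝ) ^ s.re := Real.rpow_le_rpow_of_exponent_le (by exact_mod_cast hp.le) hre
    _ = ‖(p : ℂ) ^ s‖ := (norm_natCast_cpow_of_pos (by omega) s).symm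

lemma norm_iteratedDeriv_fsp_le {p : ℕ} (hp : 12 ≤ p) (m : ℕ) :
    ‖iteratedDeriv m (fsp p) 1‖ ≤ 4 * m ! * Real.log p ^ (m + 1) / p := by
  have hp0 : (0 : ℝ) < p := by positivity
  have hL : 0 < Real.log p := Real.log_pos (by exact_mod_cast (by omega : 1 < p))
  have h12 : (12 : ℝ) ≤ p := by exact_mod_cast hp
  have hz : ∀ s ∈ closedBall (1 : ℂ) (Real.log p)⁻¹, (p : ℝ) / 4 ≤ ‖(p : ℂ) ^ s - 1‖ := by
    intro s hs
    have hpow := div_exp_one_le_norm_natCast_cpow (by omega) hs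
    have he : (p : ℝ) / 3 ≤ p / Real.exp 1 :=
      div_le_div_of_nonneg_left hp0.le (Real.exp_pos 1) Real.exp_one_lt_three.le
    have := norm_sub_norm_le ((p : ℂ) ^ s) 1
    rw [norm_one] at this
    linarith
  have hdiff : DifferentiableOn ℂ (fsp p) (closedBall 1 (Real.log p)⁻¹) := by
    intro s hs
    have hpow : DifferentiableAt ℂ (fun s : ℂ ↦ (p : ℂ) ^ s - 1) s :=
      (differentiableAt_fun_id.const_cpow (.inl (Nat.cast_ne_zero.mpr (by omega)))).sub_const 1
    rw [fsp_eq]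
    exact (((differentiableAt_invMulLogOneAddInvSubOne (by linarith [hz s hs])).comp s
      hpow).const_mul _).differentiableWithinAt
  have hbound : ∀ s ∈ sphere (1 : ℂ) (Real.log p)⁻¹, ‖fsp p s‖ ≤ 4 * Real.log p / p := by
    intro s hs
    have hzs := hz s (sphere_subset_closedBall hs)
    calc ‖fsp p s‖ = Real.log p * ‖invMulLogOneAddInvSubOne ((p : ℂ) ^ s - 1)‖ := by
          rw [fsp_eq, norm_mul, norm_real, Real.norm_of_nonneg hL.le]
      _ ≤ Real.log p * ‖(p : ℂ) ^ s - 1‖⁻¹ := by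
          gcongr
          exact norm_invMulLogOneAddInvSubOne_le (by linarith)
      _ ≤ Real.log p * ((p : ℝ) / 4)⁻¹ := by gcongr
      _ = 4 * Real.log p / p := by ring
  have := norm_iteratedDeriv_le_of_forall_mem_sphere_norm_le m (inv_pos.mpr hL)
    (hdiff.diffContOnCl_ball subset_rfl) hbound
  refine this.trans_eq ?_
  rw [inv_pow, div_inv_eq_mul]
  ring

open Filter in
lemma exists_pos_forall_le_mul_of_eventually_le_mul {P : ℕ → Prop} {a b : ℕ → ℝ} {C₀ : ℝ}
    (hb : ∀ n, P n → 0 < b n) (h : ∀ᶠ n in atTop, a n ≤ C₀ * b n) :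
    ∃ C, 0 < C ∧ ∀ n, P n → a n ≤ C * b n := by
  obtain ⟨N, hN⟩ := eventually_atTop.mp h
  have hsum : 0 ≤ ∑ n ∈ Finset.range N, |a n / b n| := by positivity
  refine ⟨max C₀ 1 + ∑ n ∈ Finset.range N, |a n / b n|, by positivity, fun n hn ↦ ?_⟩
  have hbn := hb n hn
  rcases le_or_gt N n with hNn | hnN
  · calc a n ≤ C₀ * b n := hN n hNn
      _ ≤ (max C₀ 1 + ∑ n ∈ Finset.range N, |a n / b n|) * b n := by
          gcongr
          linarith [le_max_left C₀ 1]
  · have hle : |a n / b n| ≤ ∑ n ∈ Finset.range N, |a n / b n| :=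
      Finset.single_le_sum (f := fun n ↦ |a n / b n|) (fun _ _ ↦ abs_nonneg _)
        (Finset.mem_range.mpr hnN)
    calc a n = a n / b n * b n := (div_mul_cancel₀ _ hbn.ne').symm
      _ ≤ |a n / b n| * b n := by gcongr; exact le_abs_self _
      _ ≤ (max C₀ 1 + ∑ n ∈ Finset.range N, |a n / b n|) * b n := by
          gcongr
          linarith [le_max_right C₀ 1]

/-- For every `m ≥ 0` there is `C_m > 0` such that for every prime `p`,
`|f^{(m)}(1;p)| ≤ C_m (ln p)^{m+1}/p`. -/
theorem iteratedDeriv_fsp_bound (m : ℕ) :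
    ∃ C : ℝ, 0 < C ∧ ∀ p : ℕ, p.Prime →
      ‖iteratedDeriv m (fsp p) 1‖ ≤ C * Real.log p ^ (m + 1) / p := by
  have hb (p : ℕ) (hp : p.Prime) : 0 < Real.log p ^ (m + 1) / p :=
    div_pos (pow_pos (Real.log_pos (Nat.one_lt_cast.mpr hp.one_lt)) _) (Nat.cast_pos.mpr hp.pos)
  have hlarge : ∀ᶠ p in Filter.atTop,
      ‖iteratedDeriv m (fsp p) 1‖ ≤ 4 * m ! * (Real.log p ^ (m + 1) / p) :=
    Filter.eventually_atTop.mpr ⟨12, fun p hp ↦ (norm_iteratedDeriv_fsp_le hp m).trans_eq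
      (mul_div_assoc _ _ _)⟩
  obtain ⟨C, hC, hbound⟩ := exists_pos_forall_le_mul_of_eventually_le_mul hb hlarge
  exact ⟨C, hC, fun p hp ↦ (hbound p hp).trans_eq (mul_div_assoc _ _ _).symm⟩
end

section
/- Let p be a prime and d a squarefree positive integer with gcd(d, p) = 1 and gcd(dp, a) = 1. Then ρ_{dp} = −ρ_d + (μ(d)h(d)/(H_a(z)·g(d)))·∑_{z/(dp) < k ≤ z/d, gcd(k, dpa) = 1} μ(k)²h(k). -/
open Finset

/-- `P_a(z) = ∏_{p ≤ z, p ∤ a} p`, the product over primes up to `z` not dividing `a`. -/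
noncomputable def Pa (z : ℝ) (a : ℕ) : ℕ :=
  ∏ p ∈ (Finset.range (⌊z⌋₊ + 1)).filter (fun p => p.Prime ∧ ¬p ∣ a), p

/-- `H_a(z) = ∑_{k ≤ z, (k,a)=1} μ(k)² h(k)`. -/
noncomputable def Ha (z : ℝ) (a : ℕ) (h : ℕ → ℝ) : ℝ :=
  ∑ k ∈ (Finset.Icc 1 ⌊z⌋₊).filter (fun k => Nat.gcd k a = 1),
    (ArithmeticFunction.moebius k : ℝ) ^ 2 * h k

/-- The Selberg sieve coefficients
`ρ_d = (μ(d)h(d)/(H_a(z) g(d))) ∑_{k ≤ z/d, kd | P_a(z)} μ(k)² h(k)`. -/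
noncomputable def rhoCoeff (z : ℝ) (a : ℕ) (g h : ℕ → ℝ) (d : ℕ) : ℝ :=
  ((ArithmeticFunction.moebius d : ℝ) * h d / (Ha z a h * g d)) *
    ∑ k ∈ (Finset.Icc 1 ⌊z / (d : ℝ)⌋₊).filter (fun k => k * d ∣ Pa z a),
      (ArithmeticFunction.moebius k : ℝ) ^ 2 * h k

/-!
For `k ≤ z / d` every prime factor of `k d` is at most `z`, so for squarefree `k` the condition
`k d ∣ P_a(z)` just says `gcd(k, d a) = 1`: the sum in `ρ_d` is `S(z/d, da)`, where
`S(N, n) = ∑_{k ≤ N, (k,n)=1} μ(k)² h(k)`. Splitting according to whether `p ∣ k` and writing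
`k = m p` in the second part gives `S(N, n) = S(N, np) + h(p) S(N/p, np)` for `p ∤ n`; with
`N = z/d` and `S(z/d, dpa) = S(z/(dp), dpa) + ∑_{z/(dp) < k ≤ z/d}`, this is the claim once one
knows `μ(dp) h(dp) / g(dp) = -(μ(d) h(d) / g(d)) (1 + h(p))`, i.e. `h(p) / g(p) = 1 + h(p)`.
-/

theorem sum_Icc_filter_dvd {M : Type*} [AddCommMonoid M] (F : ℕ → M) {p : ℕ} (hp : 0 < p)
    (N : ℕ) : ∑ k ∈ (Icc 1 N).filter (p ∣ ·), F k = ∑ m ∈ Icc 1 (N / p), F (m * p) := by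
  refine sum_nbij' (· / p) (· * p) (fun k hk => ?_) (fun m hm => ?_) (fun k hk => ?_)
    (fun m _ => Nat.mul_div_cancel m hp) (fun k hk => ?_)
  · simp only [mem_filter, mem_Icc] at hk ⊢
    obtain ⟨⟨hk1, hkN⟩, j, rfl⟩ := hk
    rw [Nat.mul_div_cancel_left j hp, Nat.le_div_iff_mul_le hp, mul_comm]
    exact ⟨Nat.pos_of_mul_pos_left hk1, hkN⟩
  · simp only [mem_filter, mem_Icc] at hm ⊢
    exact ⟨⟨Nat.mul_pos hm.1 hp, (Nat.le_div_iff_mul_le hp).1 hm.2⟩, dvd_mul_left p m⟩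
  · exact Nat.div_mul_cancel (mem_filter.1 hk).2
  · rw [Nat.div_mul_cancel (mem_filter.1 hk).2]

theorem Nat.squarefree_prod_primes {s : Finset ℕ} (hs : ∀ p ∈ s, p.Prime) :
    Squarefree (∏ p ∈ s, p) := by
  nth_rw 1 [← Nat.primeFactors_prod hs, ← Nat.radical_eq_prod_primeFactors]
  exact UniqueFactorizationMonoid.squarefree_radical

open ArithmeticFunction
open scoped ArithmeticFunction.Moebius

theorem moebius_sq_mul_apply_mul_prime {h : ℕ → ℝ}
    (hmul : ∀ m n : ℕ, Nat.Coprime m n → h (m * n) = h m * h n) {p : ℕ} (hp : p.Prime) (m : ℕ) :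
    (μ (m * p) : ℝ) ^ 2 * h (m * p) = if m.Coprime p then h p * ((μ m : ℝ) ^ 2 * h m) else 0 := by
  split_ifs with hmp
  · rw [isMultiplicative_moebius.map_mul_of_coprime hmp, hmul m p hmp, moebius_apply_prime hp]
    push_cast
    ring
  · have : ¬ Squarefree (m * p) := fun hsq => hmp (Nat.squarefree_mul_iff.1 hsq).1
    simp [moebius_eq_zero_of_not_squarefree this]

noncomputable def coprimeSum (h : ℕ → ℝ) (N n : ℕ) : ℝ :=
  ∑ k ∈ (Icc 1 N).filter (fun k => k.Coprime n), (μ k : ℝ) ^ 2 * h k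

theorem coprimeSum_eq_add_sum_Ioc (h : ℕ → ℝ) {M N : ℕ} (hMN : M ≤ N) (n : ℕ) :
    coprimeSum h N n = coprimeSum h M n +
      ∑ k ∈ (Ioc M N).filter (fun k => k.Coprime n), (μ k : ℝ) ^ 2 * h k := by
  have hsplit : Icc 1 N = Icc 1 M ∪ Ioc M N := by
    ext k
    simp only [mem_union, mem_Icc, mem_Ioc]
    omega
  have hdisj : Disjoint (Icc 1 M) (Ioc M N) :=
    disjoint_left.2 fun k hk hk' => by simp only [mem_Icc, mem_Ioc] at hk hk'; omega
  rw [coprimeSum, coprimeSum, hsplit, filter_union, sum_union (disjoint_filter_filter hdisj)]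

theorem coprimeSum_eq_add_mul_prime {h : ℕ → ℝ}
    (hmul : ∀ m n : ℕ, Nat.Coprime m n → h (m * n) = h m * h n) {p n : ℕ} (hp : p.Prime)
    (hpn : p.Coprime n) (N : ℕ) :
    coprimeSum h N n = coprimeSum h N (n * p) + h p * coprimeSum h (N / p) (n * p) := by
  have hcoprime (k : ℕ) : k.Coprime n ∧ ¬ p ∣ k ↔ k.Coprime (n * p) := by
    rw [Nat.coprime_mul_iff_right,
      (Nat.coprime_comm.trans hp.coprime_iff_not_dvd : k.Coprime p ↔ _)]
  have hdvd : ∑ k ∈ (Icc 1 N).filter (fun k => k.Coprime n ∧ p ∣ k), (μ k : ℝ) ^ 2 * h k =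
      h p * coprimeSum h (N / p) (n * p) := by
    rw [← filter_filter, filter_comm, sum_filter, sum_Icc_filter_dvd _ hp.pos, coprimeSum,
      mul_sum, sum_filter]
    refine sum_congr rfl fun m _ => ?_
    rw [moebius_sq_mul_apply_mul_prime hmul hp]
    simp only [Nat.coprime_mul_iff_left, Nat.coprime_mul_iff_right, ite_and, if_pos hpn]
  rw [coprimeSum, ← sum_filter_add_sum_filter_not _ (p ∣ ·), filter_filter, filter_filter, hdvd,
    filter_congr fun k _ => hcoprime k, add_comm]
  rfl

theorem dvd_Pa_iff {z : ℝ} {a n : ℕ} (hn : 0 < n) (hnz : (n : ℝ) ≤ z) :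
    n ∣ Pa z a ↔ Squarefree n ∧ n.Coprime a := by
  have hprime : ∀ q ∈ (range (⌊z⌋₊ + 1)).filter (fun q => q.Prime ∧ ¬q ∣ a), q.Prime :=
    fun q hq => (mem_filter.1 hq).2.1
  constructor
  · intro hdvd
    refine ⟨(Nat.squarefree_prod_primes hprime).squarefree_of_dvd hdvd,
      Nat.coprime_of_dvd fun q hq hqn => ?_⟩
    obtain ⟨r, hr, hqr⟩ := hq.prime.exists_mem_finset_dvd (hqn.trans hdvd)
    rw [(Nat.prime_dvd_prime_iff_eq hq (hprime r hr)).1 hqr]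
    exact (mem_filter.1 hr).2.2
  · rintro ⟨hsq, hcop⟩
    rw [← Nat.prod_primeFactors_of_squarefree hsq]
    refine prod_dvd_prod_of_subset _ _ _ fun q hq => ?_
    obtain ⟨hq, hqn, -⟩ := Nat.mem_primeFactors.1 hq
    have hqz : q ≤ ⌊z⌋₊ := Nat.le_floor ((Nat.cast_le.2 (Nat.le_of_dvd hn hqn)).trans hnz)
    exact mem_filter.2 ⟨mem_range.2 (Nat.lt_succ_of_le hqz), hq,
      (Nat.Prime.coprime_iff_not_dvd hq).1 (hcop.coprime_dvd_left hqn)⟩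

theorem sum_filter_mul_dvd_Pa_eq_coprimeSum (z : ℝ) {a d : ℕ} (hd : Squarefree d)
    (hda : d.Coprime a) (h : ℕ → ℝ) :
    ∑ k ∈ (Icc 1 ⌊z / d⌋₊).filter (fun k => k * d ∣ Pa z a), (μ k : ℝ) ^ 2 * h k =
      coprimeSum h ⌊z / d⌋₊ (d * a) := by
  rw [coprimeSum, sum_filter, sum_filter]
  refine sum_congr rfl fun k hk => ?_
  obtain ⟨hk1, hkz⟩ := mem_Icc.1 hk
  by_cases hsq : Squarefree k
  · have hkd : ((k * d : ℕ) : ℝ) ≤ z := by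
      rw [Nat.le_floor_iff' (by omega), le_div_iff₀ (by exact_mod_cast hd.ne_zero.bot_lt)] at hkz
      exact_mod_cast hkz
    have hdvd : k * d ∣ Pa z a ↔ k.Coprime (d * a) := by
      rw [dvd_Pa_iff (Nat.mul_pos hk1 hd.ne_zero.bot_lt) hkd, Nat.squarefree_mul_iff,
        Nat.coprime_mul_iff_left, Nat.coprime_mul_iff_right]
      tauto
    simp only [hdvd]
  · simp [moebius_eq_zero_of_not_squarefree hsq]

theorem moebius_mul_div_mul_prime {g h : ℕ → ℝ}
    (hgmul : ∀ m n : ℕ, Nat.Coprime m n → g (m * n) = g m * g n)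
    (hhmul : ∀ m n : ℕ, Nat.Coprime m n → h (m * n) = h m * h n) {p d : ℕ} (hp : p.Prime)
    (hgp : 0 < g p ∧ g p < 1) (hhp : h p = g p / (1 - g p)) (hdp : d.Coprime p) (c : ℝ) :
    (μ (d * p) : ℝ) * h (d * p) / (c * g (d * p)) = -((μ d : ℝ) * h d / (c * g d)) * (1 + h p) := by
  have hhg : h p / g p = 1 + h p := by
    rw [hhp]
    field_simp [hgp.1.ne', (sub_pos.2 hgp.2).ne']
    ring
  rw [isMultiplicative_moebius.map_mul_of_coprime hdp, moebius_apply_prime hp, hgmul d p hdp,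
    hhmul d p hdp, ← hhg]
  push_cast
  ring

theorem rho_mul_prime_general (a : ℕ) (z : ℝ) (g h : ℕ → ℝ)
    (hgmul : ∀ m n : ℕ, Nat.Coprime m n → g (m * n) = g m * g n)
    (hgp : ∀ p : ℕ, p.Prime → 0 < g p ∧ g p < 1)
    (hhmul : ∀ m n : ℕ, Nat.Coprime m n → h (m * n) = h m * h n)
    (hhp : ∀ p : ℕ, p.Prime → h p = g p / (1 - g p))
    (p : ℕ) (hp : p.Prime) (d : ℕ) (hd : Squarefree d)
    (hdp : Nat.Coprime d p) (hdpa : Nat.Coprime (d * p) a) :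
    rhoCoeff z a g h (d * p) =
      -rhoCoeff z a g h d +
        ((ArithmeticFunction.moebius d : ℝ) * h d / (Ha z a h * g d)) *
          ∑ k ∈ (Finset.Ioc ⌊z / ((d * p : ℕ) : ℝ)⌋₊ ⌊z / (d : ℝ)⌋₊).filter
              (fun k => Nat.gcd k (d * p * a) = 1),
            (ArithmeticFunction.moebius k : ℝ) ^ 2 * h k := by
  obtain ⟨hda, hpa⟩ := Nat.coprime_mul_iff_left.1 hdpa
  have hdp_sq : Squarefree (d * p) := Nat.squarefree_mul_iff.2 ⟨hdp, hd, hp.squarefree⟩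
  have hfloor : ⌊z / ((d * p : ℕ) : ℝ)⌋₊ = ⌊z / d⌋₊ / p := by
    rw [Nat.cast_mul, ← div_div, Nat.floor_div_natCast]
  have hrec := coprimeSum_eq_add_mul_prime hhmul hp (hdp.symm.mul_right hpa) ⌊z / d⌋₊
  rw [mul_right_comm d a p, coprimeSum_eq_add_sum_Ioc h (Nat.div_le_self _ p) (d * p * a)] at hrec
  unfold rhoCoeff
  rw [sum_filter_mul_dvd_Pa_eq_coprimeSum z hd hda,
    sum_filter_mul_dvd_Pa_eq_coprimeSum z hdp_sq hdpa,
    moebius_mul_div_mul_prime hgmul hhmul hp (hgp p hp) (hhp p hp) hdp, hfloor, hrec]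
  ring

/-- For a prime `p` and squarefree `d` with `(d,p) = 1` and `(dp,a) = 1`:
`ρ_{dp} = -ρ_d + (μ(d)h(d)/(H_a(z)g(d))) ∑_{z/(dp) < k ≤ z/d, (k,dpa)=1} μ(k)² h(k)`. -/
theorem rho_mul_prime (a : ℕ) (ha : 1 ≤ a) (z : ℝ) (hz : 2 ≤ z) (g h : ℕ → ℝ)
    (hg1 : g 1 = 1) (hgmul : ∀ m n : ℕ, Nat.Coprime m n → g (m * n) = g m * g n)
    (hgp : ∀ p : ℕ, p.Prime → 0 < g p ∧ g p < 1)
    (hh1 : h 1 = 1) (hhmul : ∀ m n : ℕ, Nat.Coprime m n → h (m * n) = h m * h n)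
    (hhp : ∀ p : ℕ, p.Prime → h p = g p / (1 - g p))
    (p : ℕ) (hp : p.Prime) (d : ℕ) (hd : Squarefree d)
    (hdp : Nat.Coprime d p) (hdpa : Nat.Coprime (d * p) a) :
    rhoCoeff z a g h (d * p) =
      -rhoCoeff z a g h d +
        ((ArithmeticFunction.moebius d : ℝ) * h d / (Ha z a h * g d)) *
          ∑ k ∈ (Finset.Ioc ⌊z / ((d * p : ℕ) : ℝ)⌋₊ ⌊z / (d : ℝ)⌋₊).filter
              (fun k => Nat.gcd k (d * p * a) = 1),
            (ArithmeticFunction.moebius k : ℝ) ^ 2 * h k :=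
  rho_mul_prime_general a z g h hgmul hgp hhmul hhp p hp d hd hdp hdpa
end

section
/- There is an absolute constant C > 0 with the following property. Let z ≥ 2 be real and let P, M, q, a, δ be squarefree positive integers with gcd(q, M) = 1, qM | P, and gcd(P, a) = gcd(P, δ) = 1. Let h be a multiplicative arithmetic function with h(n) ≥ 0 for all squarefree n. Let q = r_1 r_2 ⋯ r_s be a factorization of q into distinct primes, and set α_0 = 1 and α_k = r_1⋯r_k for 1 ≤ k ≤ s. Then for each 1 ≤ k ≤ s, the quantity R_k(M, δ) = ∑_{d ≤ z, gcd(d,a)=1, gcd(d,P)=M, δ | d} μ(d)h(d)·∑_{z/(dα_k) < l ≤ z/(dα_{k−1}), gcd(l, dα_k a)=1} μ(l)²h(l) satisfies |R_k(M, δ)| ≤ C·μ(Mδ)²·h(Mδ)·∏_{p | P} (1 + h(p)). -/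
/-!
Every squarefree `d` in the outer sum is `d = Mδn` with `(n, P) = 1`. Substituting `m = nl`, the
conditions on the pair `(d, l)` become conditions on `m` alone together with `n ∣ m`, `(n, P) = 1`:
`R_k(M, δ) = μ(Mδ) h(Mδ) ∑_m μ(m)² h(m) ∑_{n ∣ m, (n, P) = 1} μ(n)`, where `m` runs over the range
of `l` for `d = Mδ`. The inner Möbius sum is `1` if `m ∣ P` and `0` otherwise, so
`|R_k(M, δ)| ≤ h(Mδ) ∑_{m ∣ P} h(m) = h(Mδ) ∏_{p ∣ P} (1 + h(p))`, i.e. `C = 1` works.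
-/

open Finset
open scoped ArithmeticFunction.Moebius

section Divisors

open ArithmeticFunction

lemma sum_divisors_eq_prod_one_add {R : Type*} [CommSemiring R] {f : ℕ → R} (h1 : f 1 = 1)
    (hmul : ∀ m n : ℕ, m.Coprime n → f (m * n) = f m * f n) {n : ℕ} (hn : Squarefree n) :
    ∑ d ∈ n.divisors, f d = ∏ p ∈ n.primeFactors, (1 + f p) := by
  classical
  let F : ArithmeticFunction R := ⟨fun k => if k = 0 then 0 else f k, if_pos rfl⟩
  have hF : ∀ k ≠ 0, F k = f k := fun k hk => if_neg hk
  have hFmul : F.IsMultiplicative := by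
    rw [IsMultiplicative.iff_ne_zero]
    refine ⟨(hF 1 one_ne_zero).trans h1, fun {m k} hm hk hmk => ?_⟩
    rw [hF _ (mul_ne_zero hm hk), hF m hm, hF k hk, hmul m k hmk]
  calc ∑ d ∈ n.divisors, f d = ∑ d ∈ n.divisors, F d :=
        sum_congr rfl fun d hd => (hF d (Nat.pos_of_mem_divisors hd).ne').symm
    _ = ∏ p ∈ n.primeFactors, (1 + f p) := by
        rw [← hFmul.prodPrimeFactors_one_add_of_squarefree hn]
        exact prod_congr rfl fun p hp => by rw [hF p (Nat.prime_of_mem_primeFactors hp).ne_zero]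

lemma sum_moebius_divisors_filter_coprime {m P : ℕ} (hm : Squarefree m) (hP : P ≠ 0) :
    ∑ n ∈ m.divisors with n.Coprime P, (μ n : ℝ) = if m ∣ P then 1 else 0 := by
  have hm0 := hm.ne_zero
  have hg : m.gcd P ∣ m := Nat.gcd_dvd_left m P
  have hg0 : 0 < m.gcd P := Nat.gcd_pos_of_pos_right _ (Nat.pos_of_ne_zero hP)
  have hdivisors : {n ∈ m.divisors | n.Coprime P} = (m / m.gcd P).divisors := by
    ext n
    simp only [mem_filter, Nat.mem_divisors]
    constructor
    · rintro ⟨⟨hnm, -⟩, hnP⟩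
      refine ⟨(hnP.coprime_dvd_right (Nat.gcd_dvd_right m P)).dvd_of_dvd_mul_left ?_,
        (Nat.div_pos (Nat.le_of_dvd (Nat.pos_of_ne_zero hm0) hg) hg0).ne'⟩
      rwa [Nat.mul_div_cancel' hg]
    · rintro ⟨hn, -⟩
      exact ⟨⟨hn.trans (Nat.div_dvd_of_dvd hg), hm0⟩,
        (Nat.coprime_div_gcd_of_squarefree hm hP).coprime_dvd_left hn⟩
  have hone : m / m.gcd P = 1 ↔ m ∣ P := by
    rw [Nat.div_eq_iff_eq_mul_left hg0 hg, one_mul, eq_comm, Nat.gcd_eq_left_iff_dvd]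
  rw [hdivisors, ← Int.cast_sum, ← coe_mul_zeta_apply, moebius_mul_coe_zeta, one_apply]
  simp only [hone]
  split_ifs <;> simp

lemma cast_moebius_sq_eq_one {n : ℕ} (hn : Squarefree n) : (μ n : ℝ) ^ 2 = 1 := by
  exact_mod_cast moebius_sq_eq_one_of_squarefree hn

end Divisors

/- The ranges of `l` and of `d` in `R_k(M, δ)`, with `A = α_k`, `B = α_{k-1}` and `N = ⌊z⌋`;
this loses nothing since `⌊z / n⌋ = ⌊z⌋ / n` for natural `n`. -/
def lRange (N a A B d : ℕ) : Finset ℕ :=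
  (Ioc (N / (d * A)) (N / (d * B))).filter (fun l => Nat.gcd l (d * A * a) = 1)

def dRange (N a P M δ : ℕ) : Finset ℕ :=
  (Icc 1 N).filter (fun d => Nat.gcd d a = 1 ∧ Nat.gcd d P = M ∧ δ ∣ d)

section Ranges

variable {N a P M δ A B c n l : ℕ}

lemma mem_Ioc_div_mul_iff (hc : 0 < c) (hn : 0 < n) (hA : 0 < A) (hB : 0 < B) :
    l ∈ Ioc (N / (c * n * A)) (N / (c * n * B)) ↔
      n * l ∈ Ioc (N / (c * A)) (N / (c * B)) := by
  rw [mem_Ioc, mem_Ioc, Nat.div_lt_iff_lt_mul (by positivity),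
    Nat.le_div_iff_mul_le (by positivity), Nat.div_lt_iff_lt_mul (by positivity),
    Nat.le_div_iff_mul_le (by positivity), show l * (c * n * A) = n * l * (c * A) by ring,
    show l * (c * n * B) = n * l * (c * B) by ring]

lemma mem_lRange_mul_iff (hc : 0 < c) (hn : 0 < n) (hA : 0 < A) (hB : 0 < B)
    (hcop : n.Coprime (c * A * a)) :
    l ∈ lRange N a A B (c * n) ↔ n * l ∈ lRange N a A B c ∧ l.Coprime n := by
  simp only [lRange, mem_filter, mem_Ioc_div_mul_iff hc hn hA hB, ← Nat.coprime_iff_gcd_eq_one]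
  rw [show c * n * A * a = n * (c * A * a) by ring, Nat.coprime_mul_iff_right,
    Nat.coprime_mul_iff_left]
  tauto

lemma pos_and_mul_le_of_mem_lRange (hl : l ∈ lRange N a A B c) : 0 < c * B ∧ c * B * l ≤ N := by
  simp only [lRange, mem_filter, mem_Ioc] at hl
  have hl0 : 0 < l := (Nat.zero_le _).trans_lt hl.1.1
  have hcB : 0 < c * B := Nat.pos_of_ne_zero fun h0 => by simp [h0] at hl; omega
  exact ⟨hcB, mul_comm l (c * B) ▸ (Nat.le_div_iff_mul_le hcB).mp hl.1.2⟩

lemma gcd_mul_eq_iff_coprime (hM : M ∣ P) (hPδ : P.Coprime δ) (hMn : M.Coprime n) :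
    Nat.gcd (M * δ * n) P = M ↔ n.Coprime P := by
  refine ⟨fun h => ?_, fun hnP => ?_⟩
  · have : Nat.gcd n P ∣ Nat.gcd M n :=
      Nat.dvd_gcd (h ▸ Nat.gcd_dvd_gcd_of_dvd_left P (dvd_mul_left n (M * δ)))
        (Nat.gcd_dvd_left n P)
    exact Nat.dvd_one.mp (hMn.gcd_eq_one ▸ this)
  · rw [mul_assoc, Nat.Coprime.gcd_mul_right_cancel M (hPδ.symm.mul_left hnP),
      Nat.gcd_eq_left hM]

lemma dvd_of_mem_dRange (hMδ : M.Coprime δ) (hd : c ∈ dRange N a P M δ) : M * δ ∣ c := by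
  simp only [dRange, mem_filter] at hd
  obtain ⟨-, -, hdP, hδd⟩ := hd
  exact hMδ.mul_dvd_of_dvd_of_dvd (hdP ▸ Nat.gcd_dvd_left c P) hδd

lemma mul_mem_dRange_iff (hM : M ∣ P) (hPδ : P.Coprime δ) (hMδa : (M * δ).Coprime a)
    (hMn : M.Coprime n) :
    M * δ * n ∈ dRange N a P M δ ↔
      (0 < M * δ * n ∧ M * δ * n ≤ N) ∧ n.Coprime a ∧ n.Coprime P := by
  simp only [dRange, mem_filter, mem_Icc, ← Nat.coprime_iff_gcd_eq_one,
    gcd_mul_eq_iff_coprime hM hPδ hMn, dvd_mul_of_dvd_left (dvd_mul_left δ M), and_true,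
    Nat.one_le_iff_ne_zero, Nat.pos_iff_ne_zero]
  rw [Nat.coprime_mul_iff_left, and_iff_right hMδa]

lemma dRange_eq_empty (hδa : ¬ δ.Coprime a) : dRange N a P M δ = ∅ :=
  filter_eq_empty_iff.mpr fun _ _ ⟨hda, _, hδd⟩ => hδa (Nat.Coprime.coprime_dvd_left hδd hda)

end Ranges

section Reindex

variable {N a P M δ A B d l n : ℕ} {h : ℕ → ℝ}

lemma squarefree_of_summand_ne_zero (hne : (μ d : ℝ) * h d * ((μ l : ℝ) ^ 2 * h l) ≠ 0) :
    Squarefree d ∧ Squarefree l := by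
  constructor <;> by_contra hs <;>
    simp [ArithmeticFunction.moebius_eq_zero_of_not_squarefree hs] at hne

lemma summand_mul_eq (hmul : ∀ m n : ℕ, m.Coprime n → h (m * n) = h m * h n) {c : ℕ}
    (hcn : c.Coprime n) (hnl : Squarefree (n * l)) :
    (μ (c * n) : ℝ) * h (c * n) * ((μ l : ℝ) ^ 2 * h l) =
      μ c * h c * ((μ (n * l) : ℝ) ^ 2 * h (n * l) * μ n) := by
  obtain ⟨hnl', -, hl⟩ := Nat.squarefree_mul_iff.mp hnl
  rw [ArithmeticFunction.isMultiplicative_moebius.map_mul_of_coprime hcn, hmul c n hcn,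
    hmul n l hnl', cast_moebius_sq_eq_one hl, cast_moebius_sq_eq_one hnl]
  push_cast
  ring

lemma exists_eq_mul_of_mem_dRange (hP : P ≠ 0) (hM : M ∣ P) (hPa : P.Coprime a)
    (hPδ : P.Coprime δ) (hδa : δ.Coprime a) (hA : A ∣ P) (hd : d ∈ dRange N a P M δ)
    (hl : l ∈ lRange N a A B d) (hsd : Squarefree d) (hsl : Squarefree l) :
    ∃ n, d = M * δ * n ∧ (M * δ).Coprime n ∧ n.Coprime P ∧ 0 < n ∧
      n * l ∈ lRange N a A B (M * δ) ∧ Squarefree (n * l) := by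
  obtain ⟨n, rfl⟩ := dvd_of_mem_dRange (hPδ.coprime_dvd_left hM) hd
  have hcn := Nat.coprime_of_squarefree_mul hsd
  obtain ⟨⟨hcn0, -⟩, hna, hnP⟩ := (mul_mem_dRange_iff hM hPδ
    ((hPa.coprime_dvd_left hM).mul_left hδa) (hcn.coprime_dvd_left (dvd_mul_right M δ))).mp hd
  have hB : 0 < B := Nat.pos_of_mul_pos_left (pos_and_mul_le_of_mem_lRange hl).1
  obtain ⟨hnl, hln⟩ := (mem_lRange_mul_iff (Nat.pos_of_mul_pos_right hcn0)
    (Nat.pos_of_mul_pos_left hcn0) (Nat.pos_of_dvd_of_pos hA (Nat.pos_of_ne_zero hP)) hB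
    ((hcn.symm.mul_right (hnP.coprime_dvd_right hA)).mul_right hna)).mp hl
  exact ⟨n, rfl, hcn, hnP, Nat.pos_of_mul_pos_left hcn0, hnl,
    (Nat.squarefree_mul hln.symm).mpr ⟨hsd.of_mul_right, hsl⟩⟩

lemma mul_mem_dRange_of_mem_lRange (hP : P ≠ 0) (hM : M ∣ P) (hPa : P.Coprime a)
    (hPδ : P.Coprime δ) (hδa : δ.Coprime a) (hA : A ∣ P)
    (hm : n * l ∈ lRange N a A B (M * δ)) (hsq : Squarefree (n * l)) (hnP : n.Coprime P) :
    M * δ * n ∈ dRange N a P M δ ∧ l ∈ lRange N a A B (M * δ * n) ∧ (M * δ).Coprime n := by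
  obtain ⟨hcB, hmN⟩ := pos_and_mul_le_of_mem_lRange hm
  have hc : 0 < M * δ := Nat.pos_of_mul_pos_right hcB
  have hB : 0 < B := Nat.pos_of_mul_pos_left hcB
  obtain ⟨hn0, hl0⟩ := mul_ne_zero_iff.mp hsq.ne_zero
  have hncAa : n.Coprime (M * δ * A * a) :=
    (Nat.coprime_mul_iff_left.mp (Nat.coprime_iff_gcd_eq_one.mpr (mem_filter.mp hm).2)).1
  have hnc : n.Coprime (M * δ) := hncAa.coprime_dvd_right ((dvd_mul_right _ A).mul_right a)
  have hcnN : M * δ * n ≤ N := calc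
    M * δ * n ≤ M * δ * n * (B * l) := Nat.le_mul_of_pos_right _ (by positivity)
    _ = M * δ * B * (n * l) := by ring
    _ ≤ N := hmN
  have hA0 : 0 < A := Nat.pos_of_dvd_of_pos hA (Nat.pos_of_ne_zero hP)
  have hMn : M.Coprime n := hnc.symm.coprime_dvd_left (dvd_mul_right M δ)
  have hna : n.Coprime a := hncAa.coprime_dvd_right (dvd_mul_left a _)
  exact ⟨(mul_mem_dRange_iff hM hPδ ((hPa.coprime_dvd_left hM).mul_left hδa) hMn).mpr
      ⟨⟨by positivity, hcnN⟩, hna, hnP⟩,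
    (mem_lRange_mul_iff hc (by positivity) hA0 hB hncAa).mpr
      ⟨hm, (Nat.coprime_of_squarefree_mul hsq).symm⟩, hnc.symm⟩

theorem sum_sigma_dRange_lRange_eq (hmul : ∀ m n : ℕ, m.Coprime n → h (m * n) = h m * h n)
    (hP : P ≠ 0) (hδ : δ ≠ 0) (hM : M ∣ P) (hPa : P.Coprime a) (hPδ : P.Coprime δ)
    (hδa : δ.Coprime a) (hA : A ∣ P) :
    ∑ x ∈ (dRange N a P M δ).sigma (lRange N a A B),
        (μ x.1 : ℝ) * h x.1 * ((μ x.2 : ℝ) ^ 2 * h x.2) =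
      ∑ y ∈ (lRange N a A B (M * δ)).sigma (fun m => {n ∈ m.divisors | n.Coprime P}),
        (μ (M * δ) : ℝ) * h (M * δ) * ((μ y.1 : ℝ) ^ 2 * h y.1 * μ y.2) := by
  have factor := fun {d l : ℕ} (hdl : (⟨d, l⟩ : Σ _ : ℕ, ℕ) ∈ (dRange N a P M δ).sigma
      (lRange N a A B)) (hne : (μ d : ℝ) * h d * ((μ l : ℝ) ^ 2 * h l) ≠ 0) =>
    exists_eq_mul_of_mem_dRange hP hM hPa hPδ hδa hA (mem_sigma.mp hdl).1 (mem_sigma.mp hdl).2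
      (squarefree_of_summand_ne_zero hne).1 (squarefree_of_summand_ne_zero hne).2
  have hc : 0 < M * δ := Nat.pos_of_ne_zero (mul_ne_zero (ne_zero_of_dvd_ne_zero hP hM) hδ)
  refine sum_bij_ne_zero (fun x _ _ => ⟨x.1 / (M * δ) * x.2, x.1 / (M * δ)⟩) ?_ ?_ ?_ ?_
  · rintro ⟨d, l⟩ hdl hne
    obtain ⟨n, rfl, -, hnP, -, hnl, hsq⟩ := factor hdl hne
    simp only [Nat.mul_div_cancel_left n hc, mem_sigma, mem_filter, Nat.mem_divisors]
    exact ⟨hnl, ⟨dvd_mul_right n l, hsq.ne_zero⟩, hnP⟩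
  · rintro ⟨d₁, l₁⟩ hdl₁ hne₁ ⟨d₂, l₂⟩ hdl₂ hne₂ heq
    obtain ⟨n₁, rfl, -, -, hn₁, -⟩ := factor hdl₁ hne₁
    obtain ⟨n₂, rfl, -⟩ := factor hdl₂ hne₂
    simp only [Nat.mul_div_cancel_left _ hc, Sigma.mk.inj_iff, heq_eq_eq] at heq
    obtain ⟨hl, rfl⟩ := heq
    rw [Nat.eq_of_mul_eq_mul_left hn₁ hl]
  · rintro ⟨m, n⟩ hmn hne
    simp only [mem_sigma, mem_filter, Nat.mem_divisors] at hmn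
    obtain ⟨hm, ⟨⟨l, rfl⟩, -⟩, hnP⟩ := hmn
    have hsq : Squarefree (n * l) := by
      by_contra hs
      simp [ArithmeticFunction.moebius_eq_zero_of_not_squarefree hs] at hne
    obtain ⟨hd, hl, hcn⟩ := mul_mem_dRange_of_mem_lRange hP hM hPa hPδ hδa hA hm hsq hnP
    refine ⟨⟨M * δ * n, l⟩, mem_sigma.mpr ⟨hd, hl⟩, ?_, ?_⟩
    · rwa [summand_mul_eq hmul hcn hsq]
    · simp only [Nat.mul_div_cancel_left n hc]
  · rintro ⟨d, l⟩ hdl hne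
    obtain ⟨n, rfl, hcn, -, -, -, hsq⟩ := factor hdl hne
    simp only [Nat.mul_div_cancel_left n hc]
    exact summand_mul_eq hmul hcn hsq

theorem sum_dRange_eq (hmul : ∀ m n : ℕ, m.Coprime n → h (m * n) = h m * h n)
    (hP : P ≠ 0) (hδ : δ ≠ 0) (hM : M ∣ P) (hPa : P.Coprime a) (hPδ : P.Coprime δ)
    (hδa : δ.Coprime a) (hA : A ∣ P) :
    ∑ d ∈ dRange N a P M δ, (μ d : ℝ) * h d * ∑ l ∈ lRange N a A B d, (μ l : ℝ) ^ 2 * h l =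
      μ (M * δ) * h (M * δ) * ∑ m ∈ lRange N a A B (M * δ) with m ∣ P, (μ m : ℝ) ^ 2 * h m := by
  calc _ = ∑ x ∈ (dRange N a P M δ).sigma (lRange N a A B),
          (μ x.1 : ℝ) * h x.1 * ((μ x.2 : ℝ) ^ 2 * h x.2) := by
        rw [sum_sigma]; simp_rw [mul_sum]
    _ = ∑ y ∈ (lRange N a A B (M * δ)).sigma (fun m => {n ∈ m.divisors | n.Coprime P}),
          (μ (M * δ) : ℝ) * h (M * δ) * ((μ y.1 : ℝ) ^ 2 * h y.1 * μ y.2) :=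
        sum_sigma_dRange_lRange_eq hmul hP hδ hM hPa hPδ hδa hA
    _ = μ (M * δ) * h (M * δ) * ∑ m ∈ lRange N a A B (M * δ),
          (μ m : ℝ) ^ 2 * h m * ∑ n ∈ m.divisors with n.Coprime P, (μ n : ℝ) := by
        rw [sum_sigma, mul_sum]; simp_rw [mul_sum]
    _ = _ := by
        rw [sum_filter]
        refine congrArg _ (sum_congr rfl fun m _ => ?_)
        by_cases hm : Squarefree m
        · rw [sum_moebius_divisors_filter_coprime hm hP, mul_ite, mul_one, mul_zero]
        · simp [ArithmeticFunction.moebius_eq_zero_of_not_squarefree hm]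

end Reindex

section Bound

variable {N a P M δ A B : ℕ} {h : ℕ → ℝ}

lemma sum_filter_dvd_le_prod_one_add (h1 : h 1 = 1)
    (hmul : ∀ m n : ℕ, m.Coprime n → h (m * n) = h m * h n)
    (hpos : ∀ n : ℕ, Squarefree n → 0 ≤ h n) (hP : Squarefree P) (s : Finset ℕ) :
    ∑ m ∈ s with m ∣ P, (μ m : ℝ) ^ 2 * h m ≤ ∏ p ∈ P.primeFactors, (1 + h p) := by
  calc ∑ m ∈ s with m ∣ P, (μ m : ℝ) ^ 2 * h m = ∑ m ∈ s with m ∣ P, h m :=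
        sum_congr rfl fun m hm => by
          rw [cast_moebius_sq_eq_one (hP.squarefree_of_dvd (mem_filter.mp hm).2), one_mul]
    _ ≤ ∑ m ∈ P.divisors, h m :=
        sum_le_sum_of_subset_of_nonneg
          (fun m hm => Nat.mem_divisors.mpr ⟨(mem_filter.mp hm).2, hP.ne_zero⟩)
          fun m hm _ => hpos m (hP.squarefree_of_dvd (Nat.dvd_of_mem_divisors hm))
    _ = ∏ p ∈ P.primeFactors, (1 + h p) := sum_divisors_eq_prod_one_add h1 hmul hP

theorem abs_sum_dRange_le (h1 : h 1 = 1) (hmul : ∀ m n : ℕ, m.Coprime n → h (m * n) = h m * h n)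
    (hpos : ∀ n : ℕ, Squarefree n → 0 ≤ h n) (hP : Squarefree P) (hδ : Squarefree δ)
    (hM : M ∣ P) (hPa : P.Coprime a) (hPδ : P.Coprime δ) (hA : A ∣ P) :
    |∑ d ∈ dRange N a P M δ, (μ d : ℝ) * h d * ∑ l ∈ lRange N a A B d, (μ l : ℝ) ^ 2 * h l| ≤
      (μ (M * δ) : ℝ) ^ 2 * h (M * δ) * ∏ p ∈ P.primeFactors, (1 + h p) := by
  have hc : Squarefree (M * δ) :=
    (Nat.squarefree_mul (hPδ.coprime_dvd_left hM)).mpr ⟨hP.squarefree_of_dvd hM, hδ⟩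
  have hhc := hpos _ hc
  have hprod : 0 ≤ ∏ p ∈ P.primeFactors, (1 + h p) :=
    prod_nonneg fun p hp => by linarith [hpos p (Nat.prime_of_mem_primeFactors hp).squarefree]
  by_cases hδa : δ.Coprime a
  · have hX : 0 ≤ ∑ m ∈ lRange N a A B (M * δ) with m ∣ P, (μ m : ℝ) ^ 2 * h m :=
      sum_nonneg fun m hm =>
        mul_nonneg (sq_nonneg _) (hpos m (hP.squarefree_of_dvd (mem_filter.mp hm).2))
    have hμc : |(μ (M * δ) : ℝ)| = 1 := by
      exact_mod_cast ArithmeticFunction.abs_moebius_eq_one_of_squarefree hc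
    rw [sum_dRange_eq hmul hP.ne_zero hδ.ne_zero hM hPa hPδ hδa hA, abs_mul, abs_mul,
      abs_of_nonneg hhc, abs_of_nonneg hX, hμc, cast_moebius_sq_eq_one hc]
    gcongr
    exact sum_filter_dvd_le_prod_one_add h1 hmul hpos hP _
  · rw [dRange_eq_empty hδa, sum_empty, abs_zero]
    exact mul_nonneg (mul_nonneg (sq_nonneg _) hhc) hprod

end Bound

/-- There is an absolute constant `C > 0` such that for any `z ≥ 2`, any nonnegative
multiplicative `h`, squarefree `P, M, q, a, δ` with `(q,M) = 1`, `qM | P`,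
`(P,a) = (P,δ) = 1`, and `q = r_1 ⋯ r_s` a factorization into distinct primes
(`α_k = r_1⋯r_k`), for each `1 ≤ k ≤ s` the quantity
`R_k(M,δ) = ∑_{d ≤ z, (d,a)=1, (d,P)=M, δ|d} μ(d)h(d)
∑_{z/(dα_k) < l ≤ z/(dα_{k-1}), (l,dα_k a)=1} μ(l)² h(l)`
satisfies `|R_k(M,δ)| ≤ C μ(Mδ)² h(Mδ) ∏_{p|P}(1 + h(p))`. -/
theorem Rk_bound :
    ∃ C : ℝ, 0 < C ∧ ∀ z : ℝ, 2 ≤ z → ∀ h : ℕ → ℝ, h 1 = 1 →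
      (∀ m n : ℕ, Nat.Coprime m n → h (m * n) = h m * h n) →
      (∀ n : ℕ, Squarefree n → 0 ≤ h n) →
      ∀ P M q a δ : ℕ, Squarefree P → Squarefree M → Squarefree q → Squarefree a →
        Squarefree δ → Nat.Coprime q M → q * M ∣ P → Nat.Coprime P a → Nat.Coprime P δ →
      ∀ s : ℕ, ∀ r : ℕ → ℕ, (∀ i < s, (r i).Prime) →
        (∀ i < s, ∀ j < s, r i = r j → i = j) → q = ∏ i ∈ Finset.range s, r i →
      ∀ k : ℕ, 1 ≤ k → k ≤ s →
      |∑ d ∈ (Finset.Icc 1 ⌊z⌋₊).filter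
            (fun d => Nat.gcd d a = 1 ∧ Nat.gcd d P = M ∧ δ ∣ d),
          (ArithmeticFunction.moebius d : ℝ) * h d *
            ∑ l ∈ (Finset.Ioc ⌊z / ((d * ∏ i ∈ Finset.range k, r i : ℕ) : ℝ)⌋₊
                  ⌊z / ((d * ∏ i ∈ Finset.range (k - 1), r i : ℕ) : ℝ)⌋₊).filter
                (fun l => Nat.gcd l (d * (∏ i ∈ Finset.range k, r i) * a) = 1),
              (ArithmeticFunction.moebius l : ℝ) ^ 2 * h l| ≤
        C * (ArithmeticFunction.moebius (M * δ) : ℝ) ^ 2 * h (M * δ) *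
          ∏ p ∈ P.primeFactors, (1 + h p) := by
  refine ⟨1, one_pos, fun z _ h h1 hmul hpos P M q a δ hP _ _ _ hδ _ hqMP hPa hPδ s r _ _ hq k _
    hks => ?_⟩
  have hA : ∏ i ∈ range k, r i ∣ P := calc
    _ ∣ q := hq ▸ prod_dvd_prod_of_subset _ _ _ (range_subset_range.mpr hks)
    _ ∣ P := (dvd_mul_right q M).trans hqMP
  simp only [Nat.floor_div_natCast, one_mul]
  exact abs_sum_dRange_le (N := ⌊z⌋₊) h1 hmul hpos hP hδ ((dvd_mul_left M q).trans hqMP) hPa hPδ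
    hA
end

section
/- Define coefficients d_k by the power series expansion −x/((1−x)·ln(1−x)) = ∑_{k=0}^∞ d_k x^k, valid for |x| < 1, and coefficients c_k by x/(−ln(1−x)) = ∑_{k=0}^∞ c_k x^k for |x| < 1. Then d_0 = 1, d_1 = 1/2, for every k ≥ 1 one has d_k = c_0 + c_1 + ⋯ + c_k, and |d_k| ≤ 2 for every k ≥ 1. -/
/-! Let `D(x) = ∑ dₖ xᵏ`. Multiplying by `(1 - x) log (1 - x) / x = -1 + ∑_{n ≥ 1} xⁿ / (n (n + 1))`
gives `-1`, so `dₙ = ∑_{k < n} dₖ / ((n - k) (n - k + 1))` for `n ≥ 1`. The weights `1 / (j (j + 1))`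
are nonnegative with partial sums `1 - 1 / (n + 1) < 1`, so induction gives `0 ≤ dₙ ≤ 1`. The series
of `c` divided by `1 - x` is `D`, whence `dₙ = c₀ + ⋯ + cₙ`. Coefficients are compared through the
uniqueness of power series expansions. -/

open Finset

open scoped ENNReal

section PowerSeries

variable {𝕜 : Type*} [DenselyNormedField 𝕜] {a b : ℕ → 𝕜}

theorem le_radius_ofScalars_of_summable {y : 𝕜} (h : Summable fun n => a n * y ^ n) :
    (‖y‖₊ : ℝ≥0∞) ≤ (FormalMultilinearSeries.ofScalars 𝕜 a).radius :=
  FormalMultilinearSeries.le_radius_of_tendsto _ (l := 0) <| by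
    simpa [FormalMultilinearSeries.ofScalars_norm] using h.tendsto_atTop_zero.norm

theorem summable_norm_mul_pow_of_summable {x y : 𝕜} (hy : Summable fun n => a n * y ^ n)
    (hxy : ‖x‖ < ‖y‖) : Summable fun n => ‖a n * x ^ n‖ := by
  have hx : (‖x‖₊ : ℝ≥0∞) < (FormalMultilinearSeries.ofScalars 𝕜 a).radius :=
    lt_of_lt_of_le (by exact_mod_cast hxy) (le_radius_ofScalars_of_summable hy)
  simpa [FormalMultilinearSeries.ofScalars_norm] using
    (FormalMultilinearSeries.ofScalars 𝕜 a).summable_norm_mul_pow hx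

theorem hasFPowerSeriesAt_ofScalars_of_hasSum {f : 𝕜 → 𝕜} {r : ℝ} (hr : 0 < r)
    (h : ∀ x : 𝕜, ‖x‖ < r → HasSum (fun n => a n * x ^ n) (f x)) :
    HasFPowerSeriesAt f (FormalMultilinearSeries.ofScalars 𝕜 a) 0 := by
  obtain ⟨y, hy0, hyr⟩ := NormedField.exists_lt_norm_lt 𝕜 le_rfl hr
  refine ⟨‖y‖₊, ⟨le_radius_ofScalars_of_summable (h y hyr).summable, by simpa using hy0,
    fun {x} hx => ?_⟩⟩
  have hxy : ‖x‖ < ‖y‖ := by simpa using hx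
  simpa [FormalMultilinearSeries.ofScalars_apply_eq, mul_comm] using h x (hxy.trans hyr)

theorem coeff_eq_of_hasSum {f : 𝕜 → 𝕜} {r : ℝ} (hr : 0 < r)
    (ha : ∀ x : 𝕜, ‖x‖ < r → HasSum (fun n => a n * x ^ n) (f x))
    (hb : ∀ x : 𝕜, ‖x‖ < r → HasSum (fun n => b n * x ^ n) (f x)) : a = b :=
  FormalMultilinearSeries.ofScalars_series_injective 𝕜 𝕜 <|
    (hasFPowerSeriesAt_ofScalars_of_hasSum hr ha).eq_formalMultilinearSeries
      (hasFPowerSeriesAt_ofScalars_of_hasSum hr hb)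

theorem hasSum_sum_range_mul_mul_pow {f g : 𝕜 → 𝕜} {r : ℝ}
    (ha : ∀ x : 𝕜, ‖x‖ < r → HasSum (fun n => a n * x ^ n) (f x))
    (hb : ∀ x : 𝕜, ‖x‖ < r → HasSum (fun n => b n * x ^ n) (g x)) {x : 𝕜} (hx : ‖x‖ < r) :
    HasSum (fun n => (∑ k ∈ range (n + 1), a k * b (n - k)) * x ^ n) (f x * g x) := by
  obtain ⟨y, hxy, hyr⟩ := NormedField.exists_lt_norm_lt 𝕜 (norm_nonneg x) hx
  have ha_norm := summable_norm_mul_pow_of_summable (ha y hyr).summable hxy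
  have hb_norm := summable_norm_mul_pow_of_summable (hb y hyr).summable hxy
  have hprod := hasSum_sum_range_mul_of_summable_norm' ha_norm (ha x hx).summable
    hb_norm (hb x hx).summable
  rw [(ha x hx).tsum_eq, (hb x hx).tsum_eq] at hprod
  refine hprod.congr_fun fun n => ?_
  rw [sum_mul]
  refine sum_congr rfl fun k hk => ?_
  rw [← pow_mul_pow_sub x (Nat.le_of_lt_succ (mem_range.mp hk)), mul_mul_mul_comm]

end PowerSeries

theorem hasSum_ite_zero_mul_pow {𝕜 : Type*} [Semiring 𝕜] [TopologicalSpace 𝕜] (c x : 𝕜) :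
    HasSum (fun n => (if n = 0 then c else 0) * x ^ n) c :=
  (hasSum_ite_eq 0 c).congr_fun fun n => by split_ifs with hn <;> simp [hn]

theorem mem_Icc_of_eq_sum_range_mul {d w : ℕ → ℝ} (hw : ∀ n, 0 ≤ w (n + 1))
    (hw_sum : ∀ n, ∑ j ∈ range n, w (j + 1) ≤ 1) (hd₀ : d 0 ∈ Set.Icc 0 1)
    (hrec : ∀ n, 0 < n → d n = ∑ k ∈ range n, d k * w (n - k)) (n : ℕ) :
    d n ∈ Set.Icc 0 1 := by
  induction n using Nat.strong_induction_on with
  | _ n ih =>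
    rcases Nat.eq_zero_or_pos n with rfl | hn
    · exact hd₀
    have hw' : ∀ k ∈ range n, 0 ≤ w (n - k) := fun k hk => by
      simpa [Nat.sub_add_cancel (Nat.sub_pos_of_lt (mem_range.mp hk))] using hw (n - k - 1)
    rw [hrec n hn]
    constructor
    · exact sum_nonneg fun k hk => mul_nonneg (ih k (mem_range.mp hk)).1 (hw' k hk)
    calc ∑ k ∈ range n, d k * w (n - k)
        ≤ ∑ k ∈ range n, w (n - k) :=
          sum_le_sum fun k hk => mul_le_of_le_one_left (hw' k hk) (ih k (mem_range.mp hk)).2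
      _ = ∑ j ∈ range n, w (j + 1) := by
          rw [← sum_range_reflect]
          exact sum_congr rfl fun j hj => congrArg w (by have := mem_range.mp hj; omega)
      _ ≤ 1 := hw_sum n

/-- The coefficients of `(1 - x) log (1 - x) / x`: the junk value `(0 : ℝ)⁻¹ = 0` supplies the
constant term `logWeight 0 = -1`. -/
noncomputable def logWeight (n : ℕ) : ℝ := (n : ℝ)⁻¹ - ((n : ℝ) + 1)⁻¹

theorem logWeight_zero : logWeight 0 = -1 := by simp [logWeight]

theorem logWeight_one : logWeight 1 = 1 / 2 := by norm_num [logWeight]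

theorem logWeight_succ_nonneg (n : ℕ) : 0 ≤ logWeight (n + 1) := by
  rw [logWeight, sub_nonneg]
  gcongr
  linarith

theorem sum_range_logWeight_succ (n : ℕ) :
    ∑ j ∈ range n, logWeight (j + 1) = 1 - ((n : ℝ) + 1)⁻¹ := by
  simpa [logWeight] using sum_range_sub' (fun i : ℕ => ((i : ℝ) + 1)⁻¹) n

theorem Real.log_one_sub_ne_zero {x : ℝ} (hx₀ : x ≠ 0) (hx : |x| < 1) :
    Real.log (1 - x) ≠ 0 := by
  have := abs_lt.mp hx
  exact Real.log_ne_zero_of_pos_of_ne_one (by linarith) (by intro h; apply hx₀; linarith)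

theorem hasSum_logWeight_mul_pow {x : ℝ} (hx : |x| < 1) :
    HasSum (fun n => logWeight n * x ^ n)
      (if x = 0 then -1 else (1 - x) * Real.log (1 - x) / x) := by
  rcases eq_or_ne x 0 with rfl | hx₀
  · simpa [logWeight_zero] using hasSum_single (f := fun n => logWeight n * (0 : ℝ) ^ n) 0
      (fun n hn => by simp [hn])
  have hlog := Real.hasSum_pow_div_log_of_abs_lt_one hx
  have hinv : HasSum (fun n : ℕ => (n : ℝ)⁻¹ * x ^ n) (-Real.log (1 - x)) :=
    (hasSum_nat_add_iff' 1).mp (by simpa [div_eq_inv_mul] using hlog)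
  have hinv_succ : HasSum (fun n : ℕ => ((n : ℝ) + 1)⁻¹ * x ^ n) (x⁻¹ * -Real.log (1 - x)) :=
    (hlog.mul_left x⁻¹).congr_fun fun n => by field_simp; ring
  rw [if_neg hx₀, show (1 - x) * Real.log (1 - x) / x
      = -Real.log (1 - x) - x⁻¹ * -Real.log (1 - x) by field_simp; ring]
  exact (hinv.sub hinv_succ).congr_fun fun n => by rw [logWeight, sub_mul]

theorem sum_range_mul_logWeight_of_hasSum {d : ℕ → ℝ}
    (hd : ∀ x : ℝ, |x| < 1 → HasSum (fun k => d k * x ^ k)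
      (if x = 0 then 1 else -x / ((1 - x) * Real.log (1 - x)))) (n : ℕ) :
    ∑ k ∈ range (n + 1), d k * logWeight (n - k) = if n = 0 then -1 else 0 := by
  refine congrFun (coeff_eq_of_hasSum
    (a := fun n => ∑ k ∈ range (n + 1), d k * logWeight (n - k)) one_pos (fun x hx => ?_)
    fun x _ => hasSum_ite_zero_mul_pow (-1) x) n
  convert hasSum_sum_range_mul_mul_pow hd (fun x hx => hasSum_logWeight_mul_pow hx) hx using 1
  split_ifs with hx₀
  · norm_num
  · have := Real.log_one_sub_ne_zero hx₀ hx
    have := sub_ne_zero.mpr (abs_lt.mp hx).2.ne'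
    field_simp

theorem eq_sum_range_of_hasSum {c d : ℕ → ℝ}
    (hc : ∀ x : ℝ, |x| < 1 → HasSum (fun k => c k * x ^ k)
      (if x = 0 then 1 else x / (-Real.log (1 - x))))
    (hd : ∀ x : ℝ, |x| < 1 → HasSum (fun k => d k * x ^ k)
      (if x = 0 then 1 else -x / ((1 - x) * Real.log (1 - x)))) (n : ℕ) :
    d n = ∑ i ∈ range (n + 1), c i := by
  refine congrFun (coeff_eq_of_hasSum (b := fun n => ∑ i ∈ range (n + 1), c i)
    one_pos hd fun x hx => ?_) n
  convert hasSum_sum_range_mul_mul_pow (b := fun _ => 1) hc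
    (fun x hx => (hasSum_geometric_of_abs_lt_one hx).congr_fun fun n => one_mul _) hx using 1
  · simp
  split_ifs with hx₀
  · simp [hx₀]
  · have := Real.log_one_sub_ne_zero hx₀ hx
    have := sub_ne_zero.mpr (abs_lt.mp hx).2.ne'
    field_simp

/-- Let `d_k` be the Taylor coefficients at `0` of `x ↦ -x/((1-x) ln(1-x))` and `c_k` those
of `x ↦ x/(-ln(1-x))` (both with value `1` at `x = 0`). Then `d_0 = 1`, `d_1 = 1/2`,
`d_k = c_0 + c_1 + ⋯ + c_k` for `k ≥ 1`, and `|d_k| ≤ 2` for `k ≥ 1`. -/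
theorem dk_coefficients (c d : ℕ → ℝ)
    (hc : ∀ x : ℝ, |x| < 1 →
      HasSum (fun k : ℕ => c k * x ^ k)
        (if x = 0 then 1 else x / (-Real.log (1 - x))))
    (hd : ∀ x : ℝ, |x| < 1 →
      HasSum (fun k : ℕ => d k * x ^ k)
        (if x = 0 then 1 else -x / ((1 - x) * Real.log (1 - x)))) :
    d 0 = 1 ∧ d 1 = 1 / 2 ∧
      (∀ k : ℕ, 1 ≤ k → d k = ∑ i ∈ Finset.range (k + 1), c i) ∧
      ∀ k : ℕ, 1 ≤ k → |d k| ≤ 2 := by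
  have hconv := sum_range_mul_logWeight_of_hasSum hd
  have hd₀ : d 0 = 1 := by simpa [logWeight_zero] using hconv 0
  have hrec : ∀ n, 0 < n → d n = ∑ k ∈ range n, d k * logWeight (n - k) := fun n hn => by
    have := hconv n
    rw [sum_range_succ, Nat.sub_self, logWeight_zero, if_neg hn.ne'] at this
    linarith
  have hd₁ : d 1 = 1 / 2 := by simp [hrec 1 one_pos, hd₀, logWeight_one]
  have hbound := mem_Icc_of_eq_sum_range_mul logWeight_succ_nonneg
    (fun n => by rw [sum_range_logWeight_succ]; exact sub_le_self _ (by positivity))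
    (by simp [hd₀]) hrec
  refine ⟨hd₀, hd₁, fun k _ => eq_sum_range_of_hasSum hc hd k, fun k _ => ?_⟩
  obtain ⟨h₀, h₁⟩ := hbound k
  exact abs_le.mpr ⟨by linarith, by linarith⟩
end
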